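/- arXiv:1404.5460 — 10 statements merged into one kernel-verified Lean document; each statement's English description precedes it below -/
import Mathlib

section
/- Let p be a prime, d ≥ 1 an integer, and c an integer. Let A be the 3×3 integer matrix A = [[−2d, 0, 0], [0, 2c, p], [0, p, 0]]. Then the cokernel ℤ³/(A·ℤ³) is isomorphic, as an abelian group, to ℤ/2dℤ ⊕ ℤ/p²ℤ if p is odd and p ∤ c, and is isomorphic to ℤ/2dℤ ⊕ ℤ/pℤ ⊕ ℤ/pℤ if p ∣ c or p = 2. -/
/-!
The matrix is block diagonal: the block `(-2d)` contributes `ℤ/2d`, and the columns of the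
block `[[2c, p], [p, 0]]` span `{(2c b + p e, p b)}`. If `p ∣ 2c` this span is `pℤ × pℤ`; if `2c`
is prime to `p` it is the kernel of `(y, z) ↦ p y - 2c z mod p²`, which is onto `ℤ/p²` because
`2c` is invertible mod `p²`. In either case the cokernel is the target of an explicit surjection
whose kernel is the column span.
-/

open Matrix

namespace Int

lemma exists_eq_mul_add_mul_and_eq_mul_iff_of_dvd {a n : ℤ} (h : n ∣ a) (y z : ℤ) :
    (∃ b e, y = a * b + n * e ∧ z = n * b) ↔ n ∣ y ∧ n ∣ z := by
  obtain ⟨m, rfl⟩ := h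
  constructor
  · rintro ⟨b, e, rfl, rfl⟩
    exact ⟨⟨m * b + e, by ring⟩, dvd_mul_right n b⟩
  · rintro ⟨⟨k, rfl⟩, ⟨b, rfl⟩⟩
    exact ⟨b, k - m * b, by ring, rfl⟩

lemma exists_eq_mul_add_mul_and_eq_mul_iff_of_isCoprime {a n : ℤ} (hn : n ≠ 0)
    (h : IsCoprime a n) (y z : ℤ) :
    (∃ b e, y = a * b + n * e ∧ z = n * b) ↔ n ^ 2 ∣ n * y - a * z := by
  constructor
  · rintro ⟨b, e, rfl, rfl⟩
    exact ⟨e, by ring⟩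
  · rintro ⟨k, hk⟩
    obtain ⟨b, rfl⟩ : n ∣ z := h.symm.dvd_of_dvd_mul_left ⟨y - n * k, by linear_combination -hk⟩
    refine ⟨b, k, ?_, rfl⟩
    exact mul_left_cancel₀ hn (by linear_combination hk)

end Int

lemma isCoprime_two_mul_of_odd_prime {p : ℕ} (hp : p.Prime) (hodd : Odd p) {c : ℤ}
    (hpc : ¬ (p : ℤ) ∣ c) : IsCoprime (2 * c) p := by
  have hpZ : Prime (p : ℤ) := Nat.prime_iff_prime_int.mp hp
  refine (hpZ.coprime_iff_not_dvd.mpr fun h => ?_).symm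
  rcases hpZ.dvd_mul.mp h with h2 | hc
  · have : p = 2 := (Nat.prime_dvd_prime_iff_eq hp Nat.prime_two).mp (by exact_mod_cast h2)
    exact (Nat.not_odd_iff_even.mpr even_two) (this ▸ hodd)
  · exact hpc hc

def gramMatrix (d n : ℕ) (c : ℤ) : Matrix (Fin 3) (Fin 3) ℤ :=
  !![-(2 * (d : ℤ)), 0, 0; 0, 2 * c, (n : ℤ); 0, (n : ℤ), 0]

section

variable (d n : ℕ) (c : ℤ)

lemma gramMatrix_mulVec (u : Fin 3 → ℤ) :
    gramMatrix d n c *ᵥ u = ![-(2 * d) * u 0, 2 * c * u 1 + n * u 2, n * u 1] := by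
  ext i
  fin_cases i <;> simp [gramMatrix, mulVec, dotProduct, Fin.sum_univ_three]

lemma mem_range_gramMatrix_iff (y : Fin 3 → ℤ) :
    y ∈ Set.range (gramMatrix d n c).mulVecLin ↔
      (2 * d : ℤ) ∣ y 0 ∧ ∃ b e, y 1 = 2 * c * b + n * e ∧ y 2 = n * b := by
  constructor
  · rintro ⟨u, rfl⟩
    simp only [mulVecLin_apply, gramMatrix_mulVec]
    exact ⟨⟨-u 0, by simp⟩, u 1, u 2, rfl, rfl⟩
  · rintro ⟨⟨t, ht⟩, b, e, h1, h2⟩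
    refine ⟨![-t, b, e], ?_⟩
    ext i
    fin_cases i <;> simp [gramMatrix_mulVec, ht, h1, h2]

def coordMod (m : ℕ) (i : Fin 3) : (Fin 3 → ℤ) →ₗ[ℤ] ZMod m :=
  (Int.castAddHom (ZMod m)).toIntLinearMap ∘ₗ LinearMap.proj i

lemma coordMod_apply (m : ℕ) (i : Fin 3) (y : Fin 3 → ℤ) : coordMod m i y = (y i : ZMod m) :=
  rfl

def reduceCoords : (Fin 3 → ℤ) →ₗ[ℤ] ZMod (2 * d) × ZMod n × ZMod n :=
  (coordMod (2 * d) 0).prod ((coordMod n 1).prod (coordMod n 2))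

def reduceTwisted : (Fin 3 → ℤ) →ₗ[ℤ] ZMod (2 * d) × ZMod (n ^ 2) :=
  (coordMod (2 * d) 0).prod
    ((n : ℤ) • coordMod (n ^ 2) 1 - (2 * c) • coordMod (n ^ 2) 2)

lemma reduceCoords_surjective : Function.Surjective (reduceCoords d n) := by
  rintro ⟨α, β, γ⟩
  obtain ⟨x, rfl⟩ := ZMod.intCast_surjective α
  obtain ⟨y, rfl⟩ := ZMod.intCast_surjective β
  obtain ⟨z, rfl⟩ := ZMod.intCast_surjective γ
  exact ⟨![x, y, z], rfl⟩

lemma exact_gramMatrix_reduceCoords (h : (n : ℤ) ∣ 2 * c) :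
    Function.Exact (gramMatrix d n c).mulVecLin (reduceCoords d n) := by
  intro y
  rw [mem_range_gramMatrix_iff, Int.exists_eq_mul_add_mul_and_eq_mul_iff_of_dvd h]
  simp [reduceCoords, coordMod_apply, Prod.ext_iff, ZMod.intCast_zmod_eq_zero_iff_dvd]

lemma reduceTwisted_apply (y : Fin 3 → ℤ) :
    reduceTwisted d n c y =
      ((y 0 : ZMod (2 * d)), ((n * y 1 - 2 * c * y 2 : ℤ) : ZMod (n ^ 2))) := by
  simp [reduceTwisted, coordMod_apply]

lemma reduceTwisted_surjective (h : IsCoprime (2 * c) n) :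
    Function.Surjective (reduceTwisted d n c) := by
  rintro ⟨α, β⟩
  obtain ⟨x, rfl⟩ := ZMod.intCast_surjective α
  obtain ⟨z, hz⟩ := ZMod.intCast_surjective (-((2 * c : ℤ) : ZMod (n ^ 2))⁻¹ * β)
  have hunit := ZMod.coe_int_mul_inv_eq_one (n := n ^ 2) (by exact_mod_cast h.pow_right (n := 2))
  refine ⟨![x, 0, z], ?_⟩
  push_cast at hunit
  rw [reduceTwisted_apply]
  simp [hz, ← mul_assoc, hunit]

lemma exact_gramMatrix_reduceTwisted (hn : n ≠ 0) (h : IsCoprime (2 * c) n) :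
    Function.Exact (gramMatrix d n c).mulVecLin (reduceTwisted d n c) := by
  intro y
  rw [mem_range_gramMatrix_iff, Int.exists_eq_mul_add_mul_and_eq_mul_iff_of_isCoprime
    (by exact_mod_cast hn) h, reduceTwisted_apply, Prod.mk_eq_zero,
    ZMod.intCast_zmod_eq_zero_iff_dvd, ZMod.intCast_zmod_eq_zero_iff_dvd]
  push_cast
  rfl

end

theorem discriminant_group_i_eq_zero_general (p : ℕ) (hp : p.Prime) (d : ℕ) (c : ℤ)
    (A : Matrix (Fin 3) (Fin 3) ℤ)
    (hA : A = !![-(2 * (d : ℤ)), 0, 0; 0, 2 * c, (p : ℤ); 0, (p : ℤ), 0]) :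
    (Odd p ∧ ¬ ((p : ℤ) ∣ c) →
      Nonempty (((Fin 3 → ℤ) ⧸ LinearMap.range A.mulVecLin) ≃+
        (ZMod (2 * d) × ZMod (p ^ 2)))) ∧
    ((p : ℤ) ∣ c ∨ p = 2 →
      Nonempty (((Fin 3 → ℤ) ⧸ LinearMap.range A.mulVecLin) ≃+
        (ZMod (2 * d) × ZMod p × ZMod p))) := by
  subst hA
  refine ⟨fun ⟨hodd, hpc⟩ => ?_, fun h => ?_⟩
  · have hcop := isCoprime_two_mul_of_odd_prime hp hodd hpc
    exact ⟨((exact_gramMatrix_reduceTwisted d p c hp.ne_zero hcop).linearEquivOfSurjective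
      (reduceTwisted_surjective d p c hcop)).toAddEquiv⟩
  · have hdvd : (p : ℤ) ∣ 2 * c := by
      rcases h with hc | rfl
      · exact dvd_mul_of_dvd_right hc 2
      · exact dvd_mul_right 2 c
    exact ⟨((exact_gramMatrix_reduceCoords d p c hdvd).linearEquivOfSurjective
      (reduceCoords_surjective d p)).toAddEquiv⟩

/-- For a prime `p`, an integer `d ≥ 1` and an integer `c`, the cokernel
of the matrix `A = [[−2d, 0, 0], [0, 2c, p], [0, p, 0]]` acting on `ℤ³` is isomorphic to
`ℤ/2d ⊕ ℤ/p²` if `p` is odd and `p ∤ c`, and to `ℤ/2d ⊕ ℤ/p ⊕ ℤ/p` if `p ∣ c` or `p = 2`. -/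
theorem discriminant_group_i_eq_zero (p : ℕ) (hp : p.Prime) (d : ℕ) (hd : 1 ≤ d) (c : ℤ)
    (A : Matrix (Fin 3) (Fin 3) ℤ)
    (hA : A = !![-(2 * (d : ℤ)), 0, 0; 0, 2 * c, (p : ℤ); 0, (p : ℤ), 0]) :
    (Odd p ∧ ¬ ((p : ℤ) ∣ c) →
      Nonempty (((Fin 3 → ℤ) ⧸ LinearMap.range A.mulVecLin) ≃+
        (ZMod (2 * d) × ZMod (p ^ 2)))) ∧
    ((p : ℤ) ∣ c ∨ p = 2 →
      Nonempty (((Fin 3 → ℤ) ⧸ LinearMap.range A.mulVecLin) ≃+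
        (ZMod (2 * d) × ZMod p × ZMod p))) :=
  discriminant_group_i_eq_zero_general p hp d c A hA
end

section
/- Let p be a prime, d ≥ 1 an integer, and c an integer. Let A be the 3×3 integer matrix A = [[−2d, −1, 0], [−1, 2c, p], [0, p, 0]]. Then the cokernel ℤ³/(A·ℤ³) is isomorphic, as an abelian group, to ℤ/2dp²ℤ if p ∤ (1 + 4cd), and is isomorphic to ℤ/2dpℤ ⊕ ℤ/pℤ if p ∣ (1 + 4cd). -/
/-!
Integral row and column operations do not change the cokernel of a matrix, so it suffices to bring
`A` to a diagonal (Smith) form. Pivoting on the entry `-1` leaves the block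
`[[-(1 + 4cd), p], [-2dp, 0]]` of determinant `2dp²`. If `p ∣ 1 + 4cd`, one more column operation
makes it antidiagonal with entries `p` and `-2dp`; otherwise `1 + 4cd` is prime to `p`, so the gcd
of the entries is `1` and the Smith form is `diag(1, 2dp²)`.
-/

open Matrix

section Cokernel

variable {R n : Type*} [CommRing R] [Fintype n] [DecidableEq n]

theorem Matrix.range_mulVecLin_eq_top (V : Matrix n n R) [Invertible V] :
    LinearMap.range V.mulVecLin = ⊤ :=
  LinearMap.range_eq_top.mpr fun x => ⟨(⅟V) *ᵥ x, by simp [mulVec_mulVec]⟩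

theorem Matrix.range_mulVecLin_mul_mul (U A V : Matrix n n R) [Invertible U] [Invertible V] :
    LinearMap.range (U * A * V).mulVecLin =
      (LinearMap.range A.mulVecLin).map
        (U.toLinearEquiv' inferInstance : (n → R) →ₗ[R] n → R) := by
  rw [mul_assoc, mulVecLin_mul, mulVecLin_mul, LinearMap.range_comp,
    LinearMap.range_comp_of_range_eq_top _ V.range_mulVecLin_eq_top]
  rfl

noncomputable def Matrix.cokerMulMulEquiv (U A V : Matrix n n R) [Invertible U] [Invertible V] :
    ((n → R) ⧸ LinearMap.range (U * A * V).mulVecLin) ≃ₗ[R]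
      (n → R) ⧸ LinearMap.range A.mulVecLin :=
  (Submodule.Quotient.equiv _ _ _ (range_mulVecLin_mul_mul U A V).symm).symm

theorem Matrix.range_diagonal_mulVecLin (w : n → R) :
    LinearMap.range (diagonal w).mulVecLin = Submodule.pi Set.univ fun i => Ideal.span {w i} := by
  ext x
  simp only [LinearMap.mem_range, mulVecLin_apply, mulVec_diagonal, Submodule.mem_pi,
    Set.mem_univ, true_implies, Ideal.mem_span_singleton', funext_iff, mul_comm (w _)]
  exact (Classical.skolem (p := fun i a => a * w i = x i)).symm

noncomputable def Matrix.cokerDiagonalEquiv (w : n → R) :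
    ((n → R) ⧸ LinearMap.range (diagonal w).mulVecLin) ≃ₗ[R] Π i, R ⧸ Ideal.span {w i} :=
  (Submodule.quotEquivOfEq _ _ (range_diagonal_mulVecLin w)).trans (Submodule.quotientPi _)

end Cokernel

noncomputable def Int.cokerDiagonalEquivPiZMod {n : Type*} [Fintype n] [DecidableEq n]
    (w : n → ℕ) :
    ((n → ℤ) ⧸ LinearMap.range (diagonal fun i => (w i : ℤ)).mulVecLin) ≃+
      Π i, ZMod (w i) :=
  (cokerDiagonalEquiv _).toAddEquiv.trans
    (AddEquiv.piCongrRight fun i => (Int.quotientSpanNatEquivZMod (w i)).toAddEquiv)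

def ZMod.piFinThreeEquivProd (a b : ℕ) :
    (Π i : Fin 3, ZMod (![1, a, b] i)) ≃+ ZMod a × ZMod b :=
  have : Unique (ZMod (![1, a, b] 0)) := inferInstanceAs (Unique (Fin 1))
  ((Fin.consLinearEquiv ℤ fun i => ZMod (![1, a, b] i)).symm.toAddEquiv.trans
    AddEquiv.uniqueProd).trans (LinearEquiv.piFinTwo ℤ _).toAddEquiv

theorem nonempty_coker_equiv_of_mul_mul_eq_diagonal (U A V : Matrix (Fin 3) (Fin 3) ℤ)
    (hU : IsUnit U.det) (hV : IsUnit V.det) (a b : ℕ)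
    (hUAV : U * A * V = diagonal fun i => ((![1, a, b] i : ℕ) : ℤ)) :
    Nonempty (((Fin 3 → ℤ) ⧸ LinearMap.range A.mulVecLin) ≃+ ZMod a × ZMod b) := by
  let := U.invertibleOfIsUnitDet hU
  let := V.invertibleOfIsUnitDet hV
  exact ⟨(cokerMulMulEquiv U A V).symm.toAddEquiv
    |>.trans (Submodule.quotEquivOfEq _ _ (by rw [hUAV])).toAddEquiv
    |>.trans (Int.cokerDiagonalEquivPiZMod _) |>.trans (ZMod.piFinThreeEquivProd a b)⟩

def sublatticeGram (p d : ℕ) (c : ℤ) : Matrix (Fin 3) (Fin 3) ℤ :=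
  !![-(2 * (d : ℤ)), -1, 0; -1, 2 * c, (p : ℤ); 0, (p : ℤ), 0]

theorem nonempty_coker_sublatticeGram_equiv_of_isCoprime (p d : ℕ) (c : ℤ)
    (hcop : IsCoprime (p : ℤ) (1 + 4 * c * d)) :
    Nonempty (((Fin 3 → ℤ) ⧸ LinearMap.range (sublatticeGram p d c).mulVecLin) ≃+
      ZMod (2 * d * p ^ 2)) := by
  obtain ⟨s, t, hst⟩ := hcop
  let U : Matrix (Fin 3) (Fin 3) ℤ :=
    !![1, 0, 0; 2 * c, 1, 0; 4 * c * d * t * p - p, 2 * d * t * p, -1]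
  let V : Matrix (Fin 3) (Fin 3) ℤ :=
    !![0, -t, p; -1, 2 * d * t, -(2 * d * p); 0, s, 1 + 4 * c * d]
  have hU : U.det = -1 := by simp [U, det_fin_three]
  have hV : V.det = -1 := by simp [V, det_fin_three]; linear_combination -hst
  have hUAV : U * sublatticeGram p d c * V =
      diagonal fun i => ((![1, 1, 2 * d * p ^ 2] i : ℕ) : ℤ) := by
    ext i j
    fin_cases i <;> fin_cases j <;>
      simp [U, V, sublatticeGram, mul_apply, Fin.sum_univ_three] <;> grind
  obtain ⟨e⟩ := nonempty_coker_equiv_of_mul_mul_eq_diagonal U _ V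
    (by simp [hU]) (by simp [hV]) 1 (2 * d * p ^ 2) hUAV
  exact ⟨e.trans AddEquiv.uniqueProd⟩

theorem nonempty_coker_sublatticeGram_equiv_of_dvd (p d : ℕ) (c : ℤ)
    (hdvd : (p : ℤ) ∣ 1 + 4 * c * d) :
    Nonempty (((Fin 3 → ℤ) ⧸ LinearMap.range (sublatticeGram p d c).mulVecLin) ≃+
      (ZMod (2 * d * p) × ZMod p)) := by
  obtain ⟨m, hm⟩ := hdvd
  let U : Matrix (Fin 3) (Fin 3) ℤ := !![1, 0, 0; p, 0, 1; 2 * c, 1, 0]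
  let V : Matrix (Fin 3) (Fin 3) ℤ := !![0, -1, 0; -1, 2 * d, 0; 0, -m, 1]
  have hU : U.det = -1 := by simp [U, det_fin_three]
  have hV : V.det = -1 := by simp [V, det_fin_three]
  have hUAV : U * sublatticeGram p d c * V =
      diagonal fun i => ((![1, 2 * d * p, p] i : ℕ) : ℤ) := by
    ext i j
    fin_cases i <;> fin_cases j <;>
      simp [U, V, sublatticeGram, mul_apply, Fin.sum_univ_three] <;> grind
  exact nonempty_coker_equiv_of_mul_mul_eq_diagonal U _ V
    (by simp [hU]) (by simp [hV]) _ _ hUAV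

theorem discriminant_group_i_eq_one_general (p : ℕ) (hp : p.Prime) (d : ℕ) (c : ℤ)
    (A : Matrix (Fin 3) (Fin 3) ℤ)
    (hA : A = !![-(2 * (d : ℤ)), -1, 0; -1, 2 * c, (p : ℤ); 0, (p : ℤ), 0]) :
    (¬ ((p : ℤ) ∣ (1 + 4 * c * (d : ℤ))) →
      Nonempty (((Fin 3 → ℤ) ⧸ LinearMap.range A.mulVecLin) ≃+ ZMod (2 * d * p ^ 2))) ∧
    ((p : ℤ) ∣ (1 + 4 * c * (d : ℤ)) →
      Nonempty (((Fin 3 → ℤ) ⧸ LinearMap.range A.mulVecLin) ≃+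
        (ZMod (2 * d * p) × ZMod p))) := by
  subst hA
  exact ⟨fun hndvd => nonempty_coker_sublatticeGram_equiv_of_isCoprime p d c
      ((Nat.prime_iff_prime_int.mp hp).coprime_iff_not_dvd.mpr hndvd),
    nonempty_coker_sublatticeGram_equiv_of_dvd p d c⟩

/-- For a prime `p`, an integer `d ≥ 1` and an integer `c`, the cokernel
of the matrix `A = [[−2d, −1, 0], [−1, 2c, p], [0, p, 0]]` acting on `ℤ³` is isomorphic to
`ℤ/2dp²` if `p ∤ (1 + 4cd)`, and to `ℤ/2dp ⊕ ℤ/p` if `p ∣ (1 + 4cd)`. -/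
theorem discriminant_group_i_eq_one (p : ℕ) (hp : p.Prime) (d : ℕ) (hd : 1 ≤ d) (c : ℤ)
    (A : Matrix (Fin 3) (Fin 3) ℤ)
    (hA : A = !![-(2 * (d : ℤ)), -1, 0; -1, 2 * c, (p : ℤ); 0, (p : ℤ), 0]) :
    (¬ ((p : ℤ) ∣ (1 + 4 * c * (d : ℤ))) →
      Nonempty (((Fin 3 → ℤ) ⧸ LinearMap.range A.mulVecLin) ≃+ ZMod (2 * d * p ^ 2))) ∧
    ((p : ℤ) ∣ (1 + 4 * c * (d : ℤ)) →
      Nonempty (((Fin 3 → ℤ) ⧸ LinearMap.range A.mulVecLin) ≃+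
        (ZMod (2 * d * p) × ZMod p))) :=
  discriminant_group_i_eq_one_general p hp d c A hA
end

section
/- Let p be an odd prime, let d ≥ 1 be an integer, and let c, c′ be integers such that p does not divide (1 + 4cd)(1 + 4c′d). Then there exists an integer x with gcd(x, 2dp) = 1 such that 4dp² divides (1 + 4cd) − x²(1 + 4c′d), if and only if there exists an integer y such that p divides (1 + 4cd) − y²(1 + 4c′d). -/
/-!
Modulo `p`, a solution `y` of `a ≡ y² b` has `2yb` invertible since `p` is odd and `p ∤ ab`, so
Newton's iteration lifts it to a solution modulo any power of `p`. Write `d = p ^ k * m` with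
`p ∤ m`. Since `a ≡ b ≡ 1 (mod 4m)`, any `x ≡ 1 (mod 4m)` solves the congruence modulo `4m`, and
the Chinese remainder theorem glues this with a solution modulo `p ^ (k + 2)`; such an `x` is prime
to `2m`, and to `p` because `p ∤ a`.
-/

section SquareLifting

variable {R : Type*} [CommRing R]

theorem IsCoprime.of_dvd_sub_sq_mul {a b x p : R} (ha : IsCoprime a p) (h : p ∣ a - x ^ 2 * b) :
    IsCoprime x p := by
  obtain ⟨k, hk⟩ := h
  rw [show a = x * x * b + p * k by linear_combination hk, IsCoprime.add_mul_left_left_iff] at ha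
  exact ha.of_mul_left_left.of_mul_left_left

theorem dvd_sub_sq_mul_of_dvd_sub {a b x y n : R} (hxy : n ∣ x - y) (hy : n ∣ a - y ^ 2 * b) :
    n ∣ a - x ^ 2 * b := by
  rw [show a - x ^ 2 * b = (a - y ^ 2 * b) - (x - y) * ((x + y) * b) by ring]
  exact dvd_sub hy (dvd_mul_of_dvd_left hxy _)

theorem exists_pow_succ_dvd_sub_sq_mul {a b x p : R} {n : ℕ} (hx : IsCoprime (2 * x * b) p)
    (h : p ^ (n + 1) ∣ a - x ^ 2 * b) : ∃ x' : R, p ^ (n + 2) ∣ a - x' ^ 2 * b := by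
  obtain ⟨u, v, huv⟩ := hx
  obtain ⟨k, hk⟩ := h
  -- Newton's correction `(a - x² b) / (2xb)`, with `u` inverting `2xb` modulo `p`
  refine ⟨x + p ^ (n + 1) * (k * u), k * v - p ^ n * (k * u) ^ 2 * b, ?_⟩
  linear_combination hk - p ^ (n + 1) * k * huv

theorem exists_pow_dvd_sub_sq_mul {a b y p : R} (ha : IsCoprime a p) (hb : IsCoprime (2 * b) p)
    (hy : p ∣ a - y ^ 2 * b) (n : ℕ) : ∃ x : R, p ^ (n + 1) ∣ a - x ^ 2 * b := by
  induction n with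
  | zero => exact ⟨y, by simpa using hy⟩
  | succ n ih =>
    obtain ⟨x, hx⟩ := ih
    have hxp : IsCoprime x p := ha.of_dvd_sub_sq_mul ((dvd_pow_self p n.succ_ne_zero).trans hx)
    have h2xb : IsCoprime (2 * x * b) p := by
      rw [mul_right_comm]
      exact hb.mul_left hxp
    exact exists_pow_succ_dvd_sub_sq_mul h2xb hx

theorem IsCoprime.exists_dvd_sub_and_dvd_sub {m n : R} (h : IsCoprime m n) (r s : R) :
    ∃ x : R, m ∣ x - r ∧ n ∣ x - s := by
  obtain ⟨u, v, huv⟩ := h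
  refine ⟨r * v * n + s * u * m, ⟨(s - r) * u, ?_⟩, ⟨(r - s) * v, ?_⟩⟩
  · linear_combination r * huv
  · linear_combination s * huv

theorem IsCoprime.exists_isCoprime_and_mul_dvd_sub_sq_mul {a b x₀ M P : R} (hMP : IsCoprime M P)
    (hM : M ∣ a - b) (hP : P ∣ a - x₀ ^ 2 * b) (ha : IsCoprime a P) :
    ∃ x : R, IsCoprime x (M * P) ∧ M * P ∣ a - x ^ 2 * b := by
  obtain ⟨x, hx1, hxx₀⟩ := hMP.exists_dvd_sub_and_dvd_sub 1 x₀
  have hxP : P ∣ a - x ^ 2 * b := dvd_sub_sq_mul_of_dvd_sub hxx₀ hP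
  have hxM : IsCoprime x M := by
    obtain ⟨t, ht⟩ := hx1
    rw [sub_eq_iff_eq_add'.mp ht]
    exact isCoprime_one_left.add_mul_left_left t
  refine ⟨x, hxM.mul_right (ha.of_dvd_sub_sq_mul hxP), hMP.mul_dvd ?_ hxP⟩
  exact dvd_sub_sq_mul_of_dvd_sub hx1 (by simpa using hM)

end SquareLifting

/-- Let `p` be an odd prime, `d ≥ 1` an integer, and `c, c'` integers
with `p ∤ (1 + 4cd)(1 + 4c'd)`.  Then the congruence
`(1 + 4cd) ≡ x² (1 + 4c'd) (mod 4dp²)` has a solution in integers `x` coprime to `2dp`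
if and only if it has a solution modulo `p`. -/
theorem congruence_reduction_cyclic_case (p : ℕ) (hp : p.Prime) (hodd : Odd p)
    (d : ℕ) (hd : 1 ≤ d) (c c' : ℤ)
    (hndvd : ¬ ((p : ℤ) ∣ (1 + 4 * c * (d : ℤ)) * (1 + 4 * c' * (d : ℤ)))) :
    (∃ x : ℤ, Int.gcd x (2 * (d : ℤ) * (p : ℤ)) = 1 ∧
        (4 * (d : ℤ) * (p : ℤ) ^ 2) ∣ ((1 + 4 * c * (d : ℤ)) - x ^ 2 * (1 + 4 * c' * (d : ℤ)))) ↔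
      (∃ y : ℤ, (p : ℤ) ∣ ((1 + 4 * c * (d : ℤ)) - y ^ 2 * (1 + 4 * c' * (d : ℤ)))) := by
  set a := 1 + 4 * c * (d : ℤ)
  set b := 1 + 4 * c' * (d : ℤ)
  have hpZ : Prime (p : ℤ) := Nat.prime_iff_prime_int.mp hp
  have ha : IsCoprime a p := (hpZ.coprime_iff_not_dvd.mpr fun h => hndvd (h.mul_right b)).symm
  have hb : IsCoprime b p := (hpZ.coprime_iff_not_dvd.mpr fun h => hndvd (h.mul_left a)).symm
  have h2 : IsCoprime (2 : ℤ) p := by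
    exact_mod_cast Nat.isCoprime_iff_coprime.mpr (Nat.coprime_two_left.mpr hodd)
  constructor
  · rintro ⟨x, -, hx⟩
    exact ⟨x, ((dvd_pow_self _ two_ne_zero).trans (dvd_mul_left _ _)).trans hx⟩
  · rintro ⟨y, hy⟩
    obtain ⟨k, m, hpm, rfl⟩ := Nat.exists_eq_pow_mul_and_not_dvd (by omega : d ≠ 0) p hp.one_lt.ne'
    have hm : IsCoprime (m : ℤ) p := (hpZ.coprime_iff_not_dvd.mpr (by exact_mod_cast hpm)).symm
    have h4m : IsCoprime (4 * m : ℤ) (p ^ (k + 2)) := by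
      rw [show (4 : ℤ) = 2 * 2 by norm_num]
      exact ((h2.mul_left h2).mul_left hm).pow_right
    obtain ⟨x₀, hx₀⟩ := exists_pow_dvd_sub_sq_mul ha (h2.mul_left hb) hy (k + 1)
    obtain ⟨x, hxcop, hxdvd⟩ := h4m.exists_isCoprime_and_mul_dvd_sub_sq_mul
      ⟨p ^ k * (c - c'), by simp only [a, b]; push_cast; ring⟩ hx₀ ha.pow_right
    refine ⟨x, ?_, ?_⟩
    · rw [← Int.isCoprime_iff_gcd_eq_one]
      exact hxcop.of_isCoprime_of_dvd_right ⟨2 * p, by push_cast; ring⟩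
    · rwa [show (4 * ((p ^ k * m : ℕ) : ℤ) * p ^ 2) = 4 * m * p ^ (k + 2) by push_cast; ring]
end

section
/- Let p be an odd prime and let d ≥ 1 be an integer with p ∣ d, and let c, c′ be any integers. Then there exists an integer x with gcd(x, 2dp) = 1 such that 4dp² divides (1 + 4cd) − x²(1 + 4c′d). -/
/-!
Both `1 + 4cd` and `1 + 4c'd` lie in the subgroup of units congruent to `1` modulo `4d`, and
modulo `4d³` every element `1 + 4kd` of it has an inverse `1 - 4kd + 16k²d²` and a square root
`1 + 2kd - 2k²d²` (truncated binomial series; the first omitted terms are multiples of `4d³`).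
Since `p ∣ d`, the modulus `4dp²` divides `4d³`, and any `x ≡ 1 [ZMOD 2d]` is prime to `2dp`.
-/

namespace Int

theorem sq_one_add_two_mul_sub_modEq (k d : ℤ) :
    (1 + 2 * k * d - 2 * k ^ 2 * d ^ 2) ^ 2 ≡ 1 + 4 * k * d [ZMOD 4 * d ^ 3] :=
  Int.modEq_iff_dvd.mpr ⟨2 * k ^ 3 - k ^ 4 * d, by ring⟩

theorem exists_mul_one_add_four_mul_modEq_one (k d : ℤ) :
    ∃ k', (1 + 4 * k * d) * (1 + 4 * k' * d) ≡ 1 [ZMOD 4 * d ^ 3] :=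
  ⟨-k + 4 * k ^ 2 * d, Int.modEq_iff_dvd.mpr ⟨-16 * k ^ 3, by ring⟩⟩

theorem exists_sq_mul_one_add_four_mul_modEq (c c' d : ℤ) :
    ∃ x, x ≡ 1 [ZMOD 2 * d] ∧ x ^ 2 * (1 + 4 * c' * d) ≡ 1 + 4 * c * d [ZMOD 4 * d ^ 3] := by
  obtain ⟨k', hk'⟩ := exists_mul_one_add_four_mul_modEq_one c' d
  set k := c + k' + 4 * c * k' * d
  refine ⟨1 + 2 * k * d - 2 * k ^ 2 * d ^ 2,
    Int.modEq_iff_dvd.mpr ⟨-k + k ^ 2 * d, by ring⟩, ?_⟩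
  calc (1 + 2 * k * d - 2 * k ^ 2 * d ^ 2) ^ 2 * (1 + 4 * c' * d)
      ≡ (1 + 4 * k * d) * (1 + 4 * c' * d) [ZMOD 4 * d ^ 3] :=
        (sq_one_add_two_mul_sub_modEq k d).mul_right _
    _ = (1 + 4 * c * d) * ((1 + 4 * c' * d) * (1 + 4 * k' * d)) := by ring
    _ ≡ (1 + 4 * c * d) * 1 [ZMOD 4 * d ^ 3] := hk'.mul_left _
    _ = 1 + 4 * c * d := mul_one _

theorem isCoprime_of_modEq_one_two_mul {x d : ℤ} (hx : x ≡ 1 [ZMOD 2 * d]) :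
    IsCoprime x (2 * d) := by
  obtain ⟨j, hj⟩ := Int.modEq_iff_dvd.mp hx.symm
  exact ⟨1, -j, by linear_combination hj⟩

end Int

theorem congruence_always_solvable_p_dvd_d_general (p : ℕ)
    (d : ℕ) (hpd : p ∣ d) (c c' : ℤ) :
    ∃ x : ℤ, Int.gcd x (2 * (d : ℤ) * (p : ℤ)) = 1 ∧
      (4 * (d : ℤ) * (p : ℤ) ^ 2) ∣ ((1 + 4 * c * (d : ℤ)) - x ^ 2 * (1 + 4 * c' * (d : ℤ))) := by
  have hpd_int : (p : ℤ) ∣ d := Int.natCast_dvd_natCast.mpr hpd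
  obtain ⟨x, hx_one, hx_sq⟩ := Int.exists_sq_mul_one_add_four_mul_modEq c c' d
  refine ⟨x, Int.isCoprime_iff_gcd_eq_one.mp ?_, ?_⟩
  · have hx_two_d := Int.isCoprime_of_modEq_one_two_mul hx_one
    exact hx_two_d.mul_right (hx_two_d.of_mul_right_right.of_isCoprime_of_dvd_right hpd_int)
  · have hmod : 4 * (d : ℤ) * p ^ 2 ∣ 4 * (d : ℤ) ^ 3 := by
      obtain ⟨m, hm⟩ := pow_dvd_pow_of_dvd hpd_int 2
      exact ⟨m, by rw [pow_succ' _ 2, hm]; ring⟩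
    exact Int.modEq_iff_dvd.mp (hx_sq.of_dvd hmod)

/-- Let `p` be an odd prime and `d ≥ 1` with `p ∣ d`; let `c, c'` be any
integers.  Then there is an integer `x` with `gcd(x, 2dp) = 1` such that
`4dp² ∣ (1 + 4cd) − x²(1 + 4c'd)`. -/
theorem congruence_always_solvable_p_dvd_d (p : ℕ) (hp : p.Prime) (hodd : Odd p)
    (d : ℕ) (hd : 1 ≤ d) (hpd : p ∣ d) (c c' : ℤ) :
    ∃ x : ℤ, Int.gcd x (2 * (d : ℤ) * (p : ℤ)) = 1 ∧
      (4 * (d : ℤ) * (p : ℤ) ^ 2) ∣ ((1 + 4 * c * (d : ℤ)) - x ^ 2 * (1 + 4 * c' * (d : ℤ))) :=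
  congruence_always_solvable_p_dvd_d_general p d hpd c c'
end

section
/- Let p be an odd prime and d ≥ 1 an integer with p ∤ d. Let Q: 𝔽_p^{20} → 𝔽_p be the hyperbolic quadratic form Q(x) = x₁x₂ + x₃x₄ + ⋯ + x₁₉x₂₀. Then (p − 1)·#{λ ∈ 𝔽_p^{20} : 1 + 4dQ(λ) is a nonzero square in 𝔽_p} + #{λ ∈ 𝔽_p^{20} : Q(λ) ≠ 0 and d·Q(λ) is a square in 𝔽_p} = (p − 1)·(p^{10}(p^{10} + 1)/2). -/
/-!
Split `λ ∈ 𝔽_p^{20}` into its even and odd coordinates `(x, y)`, so that `Q(λ) = x ⬝ᵥ y`. For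
`x ≠ 0` the equation `x ⬝ᵥ y = c` is a nontrivial affine condition on `y`, so every fibre
`Q = c` has `(p¹⁰ - 1) p⁹` points, plus `p¹⁰` more (those with `x = 0`) when `c = 0`. Both sets
are preimages under `Q` of sets of `(p - 1) / 2` values, affine images of the nonzero squares:
`{c | 1 + 4dc is a nonzero square}`, which contains `0`, and `{c | dc is a nonzero square}`,
which does not. What remains is arithmetic.
-/

open Finset Matrix

theorem ne_zero_and_exists_mul_eq_sq_iff {M₀ : Type*} [MonoidWithZero M₀] [NoZeroDivisors M₀]
    {a : M₀} (ha : a ≠ 0) (c : M₀) :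
    (c ≠ 0 ∧ ∃ t, a * c = t ^ 2) ↔ ∃ t, t ≠ 0 ∧ a * c = t ^ 2 := by
  constructor
  · rintro ⟨hc, t, ht⟩
    exact ⟨t, by rintro rfl; exact mul_ne_zero ha hc (by simpa using ht), ht⟩
  · rintro ⟨t, ht, h⟩
    exact ⟨by rintro rfl; exact ht (by simpa using h.symm), t, h⟩

theorem sub_one_mul_count_identity {p k N M : ℕ} (hk : k * 2 = p - 1) (hN : p * M = N) :
    (p - 1) * (k * ((N - 1) * M) + N) + k * ((N - 1) * M) = (p - 1) * (N * (N + 1) / 2) := by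
  obtain ⟨r, hr⟩ := Nat.even_mul_succ_self N
  rw [hr, ← two_mul, Nat.mul_div_cancel_left _ two_pos, ← hk]
  rcases N with _ | n
  · obtain rfl : r = 0 := by omega
    simp
  rcases p with _ | p
  · simp at hN
  rw [Nat.add_sub_cancel] at hk ⊢
  subst hk
  linear_combination (k * n) * hN + k * hr

section FiniteField

variable {K : Type*} [Field K] [Fintype K]

theorem card_filter_affine (P : K → Prop) [DecidablePred P] {a : K} (ha : a ≠ 0) (b : K) :
    #{c | P (b + a * c)} = #{s | P s} :=
  card_equiv ((Equiv.mulLeft₀ a ha).trans (Equiv.addLeft b)) (by simp)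

variable [DecidableEq K]

theorem card_nonzero_squares_mul_two (hK : ringChar K ≠ 2) :
    #{s : K | ∃ t, t ≠ 0 ∧ s = t ^ 2} * 2 = Fintype.card K - 1 := by
  have hfiber : ∀ s ∈ ({s | ∃ t, t ≠ 0 ∧ s = t ^ 2} : Finset K),
      #{t ∈ univ.erase 0 | t ^ 2 = s} = 2 := by
    intro s hs
    simp only [mem_filter_univ] at hs
    obtain ⟨a, ha, rfl⟩ := hs
    have hpair : ({t ∈ univ.erase 0 | t ^ 2 = a ^ 2} : Finset K) = {a, -a} := by
      ext t
      simp only [mem_filter, mem_erase, mem_univ, and_true, mem_insert, mem_singleton,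
        sq_eq_sq_iff_eq_or_eq_neg]
      constructor
      · exact And.right
      · rintro (rfl | rfl) <;> simpa
    rw [hpair, card_pair]
    exact fun h => ha ((Ring.eq_self_iff_eq_zero_of_char_ne_two hK).mp h.symm)
  rw [← sum_const_nat hfiber, ← card_eq_sum_card_fiberwise, card_erase_of_mem (mem_univ 0),
    card_univ]
  intro t ht
  simpa using ⟨t, by simpa using ht, rfl⟩

variable {ι : Type*} [Fintype ι] [DecidableEq ι]

theorem card_dotProduct_eq {x : ι → K} (hx : x ≠ 0) (c : K) :
    #{y | x ⬝ᵥ y = c} = Fintype.card K ^ (Fintype.card ι - 1) := by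
  obtain ⟨i, hi⟩ := Function.ne_iff.mp hx
  let f : (ι → K) →+ K := AddMonoidHom.mk' (dotProduct x) (fun _ _ => dotProduct_add x _ _)
  have hsurj : ∀ b, b ∈ Set.range f := fun b =>
    ⟨Pi.single i (b / x i), by simp [f, dotProduct_single, mul_div_cancel₀ _ hi]⟩
  have hfibers : Fintype.card K * #{y | f y = c} = Fintype.card K ^ Fintype.card ι :=
    calc Fintype.card K * #{y | f y = c} = ∑ b : K, #{y | f y = b} := by
          rw [sum_const_nat fun b _ =>
            AddMonoidHom.card_fiber_eq_of_mem_range f (hsurj b) (hsurj c), card_univ, mul_comm]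
      _ = Fintype.card K ^ Fintype.card ι := by
          rw [sum_card_fiberwise_eq_card_filter]; simp
  have hι : Fintype.card ι = Fintype.card ι - 1 + 1 := by
    have := Fintype.card_pos_iff.mpr ⟨i⟩; omega
  rw [hι, pow_succ'] at hfibers
  exact Nat.eq_of_mul_eq_mul_left Fintype.card_pos hfibers

theorem card_dotProduct_fst_snd_eq (c : K) :
    #{v : (ι → K) × (ι → K) | v.1 ⬝ᵥ v.2 = c}
      = (Fintype.card K ^ Fintype.card ι - 1) * Fintype.card K ^ (Fintype.card ι - 1)
        + if c = 0 then Fintype.card K ^ Fintype.card ι else 0 := by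
  rw [card_filter, Fintype.sum_prod_type]
  simp only [← card_filter]
  rw [Fintype.sum_eq_add_sum_compl 0, add_comm]
  congr 1
  · rw [sum_congr rfl fun x hx => card_dotProduct_eq (by simpa using hx) c, sum_const, card_compl]
    simp
  · split_ifs with hc
    · simp [hc]
    · simp [Ne.symm hc]

theorem card_dotProduct_fst_snd_mem (P : K → Prop) [DecidablePred P] :
    #{v : (ι → K) × (ι → K) | P (v.1 ⬝ᵥ v.2)}
      = #{c | P c} * ((Fintype.card K ^ Fintype.card ι - 1) * Fintype.card K ^ (Fintype.card ι - 1))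
        + if P 0 then Fintype.card K ^ Fintype.card ι else 0 := by
  have h := sum_card_fiberwise_eq_card_filter univ {c | P c} fun v : (ι → K) × (ι → K) =>
    v.1 ⬝ᵥ v.2
  simp only [mem_filter_univ] at h
  rw [← h, sum_congr rfl fun c _ => card_dotProduct_fst_snd_eq c, sum_add_distrib, sum_const,
    smul_eq_mul, sum_ite_eq']
  simp only [mem_filter_univ]

end FiniteField

def evenOddEquiv (K : Type*) (n : ℕ) : (Fin (n * 2) → K) ≃ (Fin n → K) × (Fin n → K) :=
  (finProdFinEquiv.arrowCongr (Equiv.refl K)).symm.trans <|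
    (Equiv.curry _ _ _).trans <|
      (Equiv.piCongrRight fun _ => piFinTwoEquiv fun _ => K).trans
        (Equiv.arrowProdEquivProdArrow _ _ _)

theorem evenOddEquiv_apply (K : Type*) (n : ℕ) (l : Fin (n * 2) → K) :
    evenOddEquiv K n l = (fun j => l ⟨2 * j.val, by have := j.isLt; omega⟩,
      fun j => l ⟨2 * j.val + 1, by have := j.isLt; omega⟩) := by
  ext j <;> simp [evenOddEquiv, finProdFinEquiv, add_comm]

theorem natCard_hyperbolic_preimage {K : Type*} [Field K] [Fintype K] [DecidableEq K] (n : ℕ)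
    (Q : (Fin (n * 2) → K) → K)
    (hQ : ∀ x, Q x = ∑ j : Fin n,
      x ⟨2 * j.val, by have := j.isLt; omega⟩ * x ⟨2 * j.val + 1, by have := j.isLt; omega⟩)
    (P : K → Prop) [DecidablePred P] :
    Nat.card {l // P (Q l)}
      = #{c | P c} * ((Fintype.card K ^ n - 1) * Fintype.card K ^ (n - 1))
        + if P 0 then Fintype.card K ^ n else 0 := by
  have e : {l // P (Q l)} ≃ {v : (Fin n → K) × (Fin n → K) // P (v.1 ⬝ᵥ v.2)} :=
    (evenOddEquiv K n).subtypeEquiv fun l => by rw [hQ, evenOddEquiv_apply]; rfl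
  rw [Nat.card_congr e, Nat.card_eq_fintype_card, Fintype.card_subtype,
    card_dotProduct_fst_snd_mem, Fintype.card_fin]

/-- Let `p` be an odd prime and `d ≥ 1` with `p ∤ d`, and let `Q` be the
hyperbolic quadratic form on `𝔽_p^{20}`.  Then
`(p−1)·#{λ : 1 + 4dQ(λ) a nonzero square} + #{λ : Q(λ) ≠ 0 and dQ(λ) a square}
  = (p−1)·(p¹⁰(p¹⁰+1)/2)`. -/
theorem count_square_class_lattices (p : ℕ) (hp : p.Prime) (hodd : Odd p)
    (d : ℕ) (hpd : ¬ p ∣ d)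
    (Q : (Fin 20 → ZMod p) → ZMod p)
    (hQ : ∀ x, Q x = ∑ j : Fin 10,
      x ⟨2 * j.val, by have := j.isLt; omega⟩ * x ⟨2 * j.val + 1, by have := j.isLt; omega⟩) :
    (p - 1) * Nat.card {l : Fin 20 → ZMod p //
        ∃ t : ZMod p, t ≠ 0 ∧ 1 + 4 * (d : ZMod p) * Q l = t ^ 2}
      + Nat.card {l : Fin 20 → ZMod p //
          Q l ≠ 0 ∧ ∃ t : ZMod p, (d : ZMod p) * Q l = t ^ 2}
      = (p - 1) * (p ^ 10 * (p ^ 10 + 1) / 2) := by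
  have := Fact.mk hp
  have hchar : ringChar (ZMod p) ≠ 2 := by
    rw [ZMod.ringChar_zmod_n]; rintro rfl; exact Nat.not_odd_iff_even.mpr even_two hodd
  have hd0 : (d : ZMod p) ≠ 0 := by rwa [Ne, ZMod.natCast_eq_zero_iff]
  have h4d : 4 * (d : ZMod p) ≠ 0 := by
    rw [show (4 : ZMod p) = 2 ^ 2 by norm_num]
    exact mul_ne_zero (pow_ne_zero 2 (Ring.two_ne_zero hchar)) hd0
  have hA : #{c : ZMod p | ∃ t, t ≠ 0 ∧ 1 + 4 * (d : ZMod p) * c = t ^ 2}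
      = #{s : ZMod p | ∃ t, t ≠ 0 ∧ s = t ^ 2} :=
    card_filter_affine (fun s : ZMod p => ∃ t, t ≠ 0 ∧ s = t ^ 2) h4d 1
  have hB : #{c : ZMod p | c ≠ 0 ∧ ∃ t, (d : ZMod p) * c = t ^ 2}
      = #{s : ZMod p | ∃ t, t ≠ 0 ∧ s = t ^ 2} :=
    .trans (congrArg card (filter_congr fun c _ => by
        rw [zero_add, ne_zero_and_exists_mul_eq_sq_iff hd0]))
      (card_filter_affine (fun s : ZMod p => ∃ t, t ≠ 0 ∧ s = t ^ 2) hd0 0)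
  have hk := card_nonzero_squares_mul_two hchar
  have hcount := natCard_hyperbolic_preimage (K := ZMod p) 10 Q hQ
  rw [ZMod.card] at hk hcount
  rw [hcount (fun c => ∃ t, t ≠ 0 ∧ 1 + 4 * (d : ZMod p) * c = t ^ 2),
    hcount (fun c => c ≠ 0 ∧ ∃ t, (d : ZMod p) * c = t ^ 2), hA, hB,
    if_pos ⟨1, one_ne_zero, by ring⟩, if_neg fun h => h.1 rfl, add_zero]
  exact sub_one_mul_count_identity hk (pow_succ' p 9).symm
end

section
/- Let p > 3 be a prime and let c be an integer with p ∤ c. Then there exists an integer x with gcd(x, 2p) = 1 such that 4p² divides (4p² − 1)/3 − (p² + 4c)·x², if and only if −3c is a quadratic residue modulo p (i.e., there exists y with p ∣ 3c + y²). -/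
/-! Put `N = (4p² − 1)/3`. For odd `x`, `N − (p² + 4c)x²` is divisible by `4`, and three times it
is `≡ −(12cx² + 1) (mod p²)`; so the congruence says exactly that `x² ≡ −1/(12c) (mod p²)`.
Reducing mod `p`, `y = 6cx` shows that `−3c` is a square. Conversely a square root `y` of `−3c`
mod `p` gives the square root `2y` of `−12c`, which lifts mod `p²` by Hensel's lemma; dividing it
by `12c` and adding a suitable multiple of `p²` yields an odd `x`. -/

namespace Int

theorem three_dvd_four_mul_sq_sub_one {n : ℤ} (h : ¬ 3 ∣ n) : 3 ∣ 4 * n ^ 2 - 1 := by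
  rw [dvd_iff_emod_eq_zero] at h ⊢
  rcases (by omega : n % 3 = 1 ∨ n % 3 = 2) with h | h <;>
    simp [sub_emod, mul_emod, pow_two, h]

theorem exists_sq_dvd_sq_sub_of_dvd_sq_sub {P a y : ℤ} (h2 : IsCoprime 2 P)
    (ha : IsCoprime a P) (hy : P ∣ y ^ 2 - a) : ∃ z, P ^ 2 ∣ z ^ 2 - a := by
  obtain ⟨k, hk⟩ := hy
  have hyP : IsCoprime y P := by
    rw [← IsCoprime.pow_left_iff two_pos]
    exact IsCoprime.of_add_mul_right_left (z := -k) (by rwa [show y ^ 2 + -k * P = a by linarith])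
  obtain ⟨u, v, huv⟩ := h2.mul_left hyP
  -- Newton's step `z = y - (y ^ 2 - a) / (2 * y)`
  refine ⟨y - k * u * P, k * v + k ^ 2 * u ^ 2, ?_⟩
  linear_combination hk - k * P * huv

theorem exists_odd_sq_dvd_mul_sq_add_one {P a z : ℤ} (hP : Odd P) (ha : IsCoprime a P)
    (hz : P ^ 2 ∣ z ^ 2 + a) : ∃ x, Odd x ∧ P ^ 2 ∣ a * x ^ 2 + 1 := by
  obtain ⟨u, v, huv⟩ := ha.pow_right (n := 2)
  obtain ⟨k, hk⟩ := hz
  -- `z * u` is a square root of `-1 / a` mod `P ^ 2`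
  set x₀ := z * u
  refine ⟨x₀ + (x₀ + 1) * P ^ 2, ?_, ?_⟩
  · rcases even_or_odd x₀ with h | h <;> simp [parity_simps, h, hP]
  · exact ⟨a * u ^ 2 * k + v * (1 + a * u) + a * (x₀ + 1) * (2 * x₀ + (x₀ + 1) * P ^ 2),
      by linear_combination a * u ^ 2 * hk - (1 + a * u) * huv⟩

theorem four_mul_sq_dvd_sub_iff {P N c x : ℤ} (hN : 3 * N = 4 * P ^ 2 - 1) (hP : Odd P)
    (hx : Odd x) : 4 * P ^ 2 ∣ N - (P ^ 2 + 4 * c) * x ^ 2 ↔ P ^ 2 ∣ 12 * c * x ^ 2 + 1 := by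
  set M := N - (P ^ 2 + 4 * c) * x ^ 2
  have h4M : 4 ∣ M := by
    obtain ⟨m, hm⟩ := hP.mul hx
    refine (show IsCoprime (4 : ℤ) 3 from ⟨1, -1, by norm_num⟩).dvd_of_dvd_mul_left
      ⟨P ^ 2 - 3 * (m ^ 2 + m) - 3 * c * x ^ 2 - 1, ?_⟩
    linear_combination hN - 3 * (P * x + 2 * m + 1) * hm
  have h3M : 3 * M = P ^ 2 * (4 - 3 * x ^ 2) - (12 * c * x ^ 2 + 1) := by
    linear_combination hN
  have hM : P ^ 2 ∣ M ↔ P ^ 2 ∣ 12 * c * x ^ 2 + 1 := by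
    have h3P : IsCoprime (P ^ 2) 3 := ⟨4, -N, by linear_combination -hN⟩
    rw [← dvd_sub_right (dvd_mul_right (P ^ 2) (4 - 3 * x ^ 2)) (c := 12 * c * x ^ 2 + 1), ← h3M]
    exact ⟨fun h ↦ h.mul_left 3, h3P.dvd_of_dvd_mul_left⟩
  have h4P : IsCoprime 4 (P ^ 2) := by
    simpa using (isCoprime_two_left.2 hP).pow (m := 2) (n := 2)
  exact ⟨fun h ↦ hM.1 (dvd_of_mul_left_dvd h), fun h ↦ h4P.mul_dvd h4M (hM.2 h)⟩

end Int

/-- Let `p > 3` be a prime and `c` an integer with `p ∤ c`.  Then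
`(4p² − 1)/3 ≡ (p² + 4c) x² (mod 4p²)` is solvable with `gcd(x, 2p) = 1` if and only if
`−3c` is a quadratic residue modulo `p`. -/
theorem cubic_fourfold_congruence (p : ℕ) (hp : p.Prime) (hp3 : 3 < p)
    (c : ℤ) (hc : ¬ ((p : ℤ) ∣ c)) :
    (∃ x : ℤ, Int.gcd x (2 * (p : ℤ)) = 1 ∧
        (4 * (p : ℤ) ^ 2) ∣ ((4 * (p : ℤ) ^ 2 - 1) / 3 - ((p : ℤ) ^ 2 + 4 * c) * x ^ 2)) ↔
      (∃ y : ℤ, (p : ℤ) ∣ (3 * c + y ^ 2)) := by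
  have hP : Odd (p : ℤ) := by exact_mod_cast hp.odd_of_ne_two (by omega)
  have h3 : ¬ (3 : ℤ) ∣ p := by
    have : ¬ 3 ∣ p := fun h ↦ by have := (Nat.prime_dvd_prime_iff_eq Nat.prime_three hp).1 h; omega
    exact_mod_cast this
  have hN : 3 * ((4 * (p : ℤ) ^ 2 - 1) / 3) = 4 * (p : ℤ) ^ 2 - 1 :=
    Int.mul_ediv_cancel' (Int.three_dvd_four_mul_sq_sub_one h3)
  constructor
  · rintro ⟨x, hx, hdvd⟩
    have hx2 : Odd x :=
      Int.isCoprime_two_right.1 (Int.isCoprime_iff_gcd_eq_one.2 hx).of_mul_right_left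
    have hpx : (p : ℤ) ∣ 12 * c * x ^ 2 + 1 :=
      (dvd_pow_self _ two_ne_zero).trans ((Int.four_mul_sq_dvd_sub_iff hN hP hx2).1 hdvd)
    refine ⟨6 * c * x, ?_⟩
    rw [show 3 * c + (6 * c * x) ^ 2 = 3 * c * (12 * c * x ^ 2 + 1) by ring]
    exact hpx.mul_left (3 * c)
  · rintro ⟨y, hy⟩
    have h2 : IsCoprime 2 (p : ℤ) := Int.isCoprime_two_left.2 hP
    have h12c : IsCoprime (12 * c) p := by
      rw [show (12 : ℤ) * c = 2 * 2 * 3 * c by ring]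
      exact ((h2.mul_left h2).mul_left (Int.prime_three.coprime_iff_not_dvd.2 h3)).mul_left
        ((Nat.prime_iff_prime_int.1 hp).coprime_iff_not_dvd.2 hc).symm
    obtain ⟨z, hz⟩ := Int.exists_sq_dvd_sq_sub_of_dvd_sq_sub (y := 2 * y) h2 h12c.neg_left (by
      rw [show (2 * y) ^ 2 - -(12 * c) = 4 * (3 * c + y ^ 2) by ring]
      exact hy.mul_left 4)
    obtain ⟨x, hx, k, hk⟩ := Int.exists_odd_sq_dvd_mul_sq_add_one hP h12c (by simpa using hz)
    have hxp : IsCoprime x p := ⟨-(12 * c * x), p * k, by linear_combination -hk⟩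
    refine ⟨x, Int.isCoprime_iff_gcd_eq_one.1 ?_, (Int.four_mul_sq_dvd_sub_iff hN hP hx).2 ⟨k, hk⟩⟩
    exact (Int.isCoprime_two_right.2 hx).mul_right hxp
end

section
/- Let d ≥ 1 be an integer. There exists an integer x with gcd(x, 2d) = 1 such that 4d divides x² + 3, if and only if d is odd and every prime divisor q of d satisfies q ≡ 1 (mod 3). -/
/-!
For odd `d`, the Chinese remainder theorem splits `x² ≡ -3 (mod 4d)` into the trivial condition
mod `4` and conditions mod the prime powers `p^k ∥ d`; as `p ∤ 6`, Hensel's lemma reduces these to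
`-3` being a square mod `p`, which by quadratic reciprocity means `p ≡ 1 (mod 3)`. Conversely
`8 ∤ x² + 3`, so `d` must be odd. Finally, since `2d ∣ x² + 3`, `gcd(x, 2d) = 1` holds iff
`gcd(3, 2d) = 1`, i.e. iff `3 ∤ d`.
-/

theorem isCoprime_iff_of_dvd_sq_add {R : Type*} [CommRing R] {n x c : R} (h : n ∣ x ^ 2 + c) :
    IsCoprime x n ↔ IsCoprime c n := by
  obtain ⟨k, hk⟩ := h
  rw [show c = -(x * x) + n * k by linear_combination hk, IsCoprime.add_mul_left_left_iff,
    IsCoprime.neg_left_iff, IsCoprime.mul_left_iff, and_self]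

theorem Int.not_eight_dvd_sq_add_three (x : ℤ) : ¬ 8 ∣ x ^ 2 + 3 := by
  intro h
  have := (ZMod.intCast_zmod_eq_zero_iff_dvd (x ^ 2 + 3) 8).mpr h
  push_cast at this
  generalize (x : ZMod 8) = y at this
  revert y
  decide

theorem Int.exists_sq_sub_dvd_pow_add_two {p a x : ℤ} {k : ℕ} (hp : Prime p) (ha : ¬ p ∣ 2 * a)
    (hx : p ^ (k + 1) ∣ x ^ 2 - a) : ∃ y, p ^ (k + 2) ∣ y ^ 2 - a := by
  obtain ⟨s, hs⟩ := hx
  obtain ⟨u, v, huv⟩ : IsCoprime p (2 * x) := hp.coprime_iff_not_dvd.mpr fun h ↦ ha <| by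
    rw [show 2 * a = 2 * x * x - p * (2 * p ^ k * s) by linear_combination -2 * hs]
    exact dvd_sub (h.mul_right x) (dvd_mul_right p _)
  -- Newton's step: correct `x` by `-s v p^(k+1)`, where `v` inverts `2x` modulo `p`.
  refine ⟨x - s * v * p ^ (k + 1), s * u + s ^ 2 * v ^ 2 * p ^ k, ?_⟩
  linear_combination hs - s * p ^ (k + 1) * huv

namespace ZMod

theorem isSquare_intCast_iff {n : ℕ} {a : ℤ} :
    IsSquare (a : ZMod n) ↔ ∃ x : ℤ, (n : ℤ) ∣ x ^ 2 - a := by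
  simp_rw [← intCast_zmod_eq_zero_iff_dvd, Int.cast_sub, Int.cast_pow, sub_eq_zero, sq]
  constructor
  · rintro ⟨r, hr⟩
    obtain ⟨x, rfl⟩ := intCast_surjective r
    exact ⟨x, hr.symm⟩
  · rintro ⟨x, hx⟩
    exact ⟨x, hx.symm⟩

theorem isSquare_intCast_mul_iff {m n : ℕ} {a : ℤ} (h : m.Coprime n) :
    IsSquare (a : ZMod (m * n)) ↔ IsSquare (a : ZMod m) ∧ IsSquare (a : ZMod n) := by
  have hcrt : chineseRemainder h a = ((a : ZMod m), (a : ZMod n)) := by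
    rw [map_intCast]
    rfl
  constructor
  · intro ha
    have := ha.map (chineseRemainder h)
    rw [hcrt] at this
    obtain ⟨r, hr⟩ := this
    exact ⟨⟨r.1, congrArg Prod.fst hr⟩, ⟨r.2, congrArg Prod.snd hr⟩⟩
  · rintro ⟨⟨r, hr⟩, ⟨s, hs⟩⟩
    have : IsSquare ((a : ZMod m), (a : ZMod n)) := ⟨(r, s), Prod.ext hr hs⟩
    simpa [← hcrt] using this.map (chineseRemainder h).symm

theorem isSquare_intCast_prime_pow {p : ℕ} {a : ℤ} (hp : p.Prime) (ha : ¬ (p : ℤ) ∣ 2 * a)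
    (h : IsSquare (a : ZMod p)) (k : ℕ) : IsSquare (a : ZMod (p ^ (k + 1))) := by
  induction k with
  | zero => rwa [zero_add, pow_one]
  | succ k ih =>
    rw [isSquare_intCast_iff] at ih ⊢
    obtain ⟨x, hx⟩ := ih
    push_cast at hx ⊢
    exact Int.exists_sq_sub_dvd_pow_add_two (Nat.prime_iff_prime_int.mp hp) ha hx

theorem isSquare_intCast_of_forall_prime_dvd {a : ℤ} {n : ℕ} (hn : n ≠ 0)
    (h : ∀ p : ℕ, p.Prime → p ∣ n → ¬ (p : ℤ) ∣ 2 * a ∧ IsSquare (a : ZMod p)) :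
    IsSquare (a : ZMod n) := by
  induction n using Nat.recOnPosPrimePosCoprime with
  | prime_pow p k hp hk =>
    obtain ⟨k, rfl⟩ := Nat.exists_eq_succ_of_ne_zero hk.ne'
    obtain ⟨ha, hsq⟩ := h p hp (dvd_pow_self p hk.ne')
    exact isSquare_intCast_prime_pow hp ha hsq k
  | zero => exact absurd rfl hn
  | one => exact ⟨0, Subsingleton.elim _ _⟩
  | coprime m n hm hn hmn ihm ihn =>
    exact (isSquare_intCast_mul_iff hmn).mpr
      ⟨ihm (by omega) fun p hp hpm ↦ h p hp (dvd_mul_of_dvd_left hpm n),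
        ihn (by omega) fun p hp hpn ↦ h p hp (dvd_mul_of_dvd_right hpn m)⟩

theorem isSquare_neg_three_iff {p : ℕ} [Fact p.Prime] (hp2 : p ≠ 2) (hp3 : p ≠ 3) :
    IsSquare (-3 : ZMod p) ↔ p % 3 = 1 := by
  have hp : p.Prime := Fact.out
  have h3 : ((-3 : ℤ) : ZMod p) ≠ 0 := by
    rw [Ne, intCast_zmod_eq_zero_iff_dvd, Int.dvd_neg]
    exact_mod_cast (Nat.prime_dvd_prime_iff_eq hp Nat.prime_three).not.mpr hp3
  have hrec : legendreSym p (-3) = legendreSym 3 p := by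
    have hqr := legendreSym.quadratic_reciprocity' (p := 3) (q := p) (by decide) hp2
    rw [Nat.cast_ofNat] at hqr
    rw [legendreSym.at_neg hp2, hqr, χ₄_eq_neg_one_pow (hp.mod_two_eq_one_iff_ne_two.mpr hp2),
      ← mul_assoc, ← pow_add, show p / 2 + 3 / 2 * (p / 2) = 2 * (p / 2) by omega, pow_mul,
      neg_one_sq, one_pow, one_mul]
  have hp3' : p % 3 = 1 ∨ p % 3 = 2 := by
    have := (Nat.prime_dvd_prime_iff_eq Nat.prime_three hp).not.mpr (Ne.symm hp3)
    omega
  rw [← Int.cast_ofNat, ← Int.cast_neg, ← legendreSym.eq_one_iff p h3, hrec, legendreSym.mod,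
    ← Int.natCast_mod]
  rcases hp3' with h | h <;> rw [h]
  · simp [legendreSym.at_one]
  · simp only [OfNat.ofNat_ne_one, iff_false]
    decide

theorem isSquare_neg_three_of_forall_prime_dvd {n : ℕ} (hn : n ≠ 0)
    (h : ∀ q : ℕ, q.Prime → q ∣ n → q % 3 = 1) : IsSquare ((-3 : ℤ) : ZMod n) := by
  refine isSquare_intCast_of_forall_prime_dvd hn fun p hp hpn ↦ ?_
  have : Fact p.Prime := ⟨hp⟩
  have hp1 := h p hp hpn
  refine ⟨fun hpa ↦ ?_, by exact_mod_cast (isSquare_neg_three_iff (by omega) (by omega)).mpr hp1⟩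
  have h6 : (p : ℤ) ∣ 6 := by simpa using hpa
  have := Nat.le_of_dvd (by norm_num) (Int.natCast_dvd_natCast.mp h6)
  have := hp.two_le
  interval_cases p <;> omega

end ZMod

theorem mod_three_eq_one_of_dvd_sq_add_three {q : ℕ} (hq : q.Prime) (hq2 : q ≠ 2) {x : ℤ}
    (hqx : (q : ℤ) ∣ x ^ 2 + 3) (hxq : IsCoprime x q) : q % 3 = 1 := by
  have : Fact q.Prime := ⟨hq⟩
  have hq3 : q ≠ 3 := by
    rintro rfl
    simpa [Int.isCoprime_iff_gcd_eq_one] using (isCoprime_iff_of_dvd_sq_add hqx).mp hxq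
  refine (ZMod.isSquare_neg_three_iff hq2 hq3).mp ?_
  exact_mod_cast ZMod.isSquare_intCast_iff.mpr ⟨x, by simpa using hqx⟩

theorem degree_18d_congruence_general (d : ℕ) :
    (∃ x : ℤ, Int.gcd x (2 * (d : ℤ)) = 1 ∧ (4 * (d : ℤ)) ∣ (x ^ 2 + 3)) ↔
      (Odd d ∧ ∀ q : ℕ, q.Prime → q ∣ d → q % 3 = 1) := by
  constructor
  · rintro ⟨x, hgcd, hx⟩
    have hodd : Odd d := by
      by_contra heven
      obtain ⟨m, rfl⟩ := Nat.not_odd_iff_even.mp heven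
      exact Int.not_eight_dvd_sq_add_three x (dvd_trans ⟨m, by push_cast; ring⟩ hx)
    refine ⟨hodd, fun q hq hqd ↦ mod_three_eq_one_of_dvd_sq_add_three hq (x := x) ?_ ?_ ?_⟩
    · rintro rfl
      exact Nat.not_even_iff_odd.mpr hodd (even_iff_two_dvd.mpr hqd)
    · exact dvd_trans (by exact_mod_cast dvd_mul_of_dvd_right hqd 4) hx
    · exact (Int.isCoprime_iff_gcd_eq_one.mpr hgcd).of_isCoprime_of_dvd_right
        (by exact_mod_cast dvd_mul_of_dvd_right hqd 2)
  · rintro ⟨hodd, hd⟩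
    have h4d : IsSquare ((-3 : ℤ) : ZMod (4 * d)) :=
      (ZMod.isSquare_intCast_mul_iff ((Nat.coprime_two_left.mpr hodd).pow_left 2)).mpr
        ⟨⟨1, by decide⟩, ZMod.isSquare_neg_three_of_forall_prime_dvd hodd.pos.ne' hd⟩
    obtain ⟨x, hx⟩ := ZMod.isSquare_intCast_iff.mp h4d
    rw [sub_neg_eq_add] at hx
    push_cast at hx
    have hd3 : ¬ 3 ∣ d := fun h ↦ by simpa using hd 3 Nat.prime_three h
    have h3 : IsCoprime 3 (2 * (d : ℤ)) := Int.prime_three.coprime_iff_not_dvd.mpr (by omega)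
    refine ⟨x, Int.isCoprime_iff_gcd_eq_one.mp ?_, hx⟩
    exact (isCoprime_iff_of_dvd_sq_add (dvd_trans ⟨2, by ring⟩ hx)).mpr h3

/-- For an integer `d ≥ 1`, the congruence `x² + 3 ≡ 0 (mod 4d)` has a
solution with `gcd(x, 2d) = 1` if and only if `d` is odd and every prime divisor `q` of
`d` satisfies `q ≡ 1 (mod 3)`. -/
theorem degree_18d_congruence (d : ℕ) (hd : 1 ≤ d) :
    (∃ x : ℤ, Int.gcd x (2 * (d : ℤ)) = 1 ∧ (4 * (d : ℤ)) ∣ (x ^ 2 + 3)) ↔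
      (Odd d ∧ ∀ q : ℕ, q.Prime → q ∣ d → q % 3 = 1) :=
  degree_18d_congruence_general d
end

section
/- Let K be a field of characteristic different from 2, let q be a nondegenerate quadratic form on a K-vector space V of even dimension 2n, and let Δ = (−1)ⁿ·det(M) be its signed discriminant, where M is a Gram matrix of q; assume Δ is not a square in K, and set L = K[X]/(X² − Δ) ≅ K(√Δ). Write C(q) for the Clifford algebra of q, with even part C₀(q) and odd part C₁(q), and regard C(q) = C₀(q) ⊕ C₁(q) as a right C₀(q)-module. Then the K-linear map V ⊗_K L → End_{C₀(q)}(C₀(q) ⊕ C₁(q)) sending v ⊗ 1 to left multiplication by v extends, by the universal property of the Clifford algebra, to an isomorphism of K-algebras C(q) ⊗_K L ≅ End_{C₀(q)}(C₀(q) ⊕ C₁(q)). Consequently, the Brauer class c₀(q) of C₀(q) in Br(L) equals the restriction c(q) ⊗_K L of the Brauer class of C(q). -/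
/-!
In an orthogonal basis `e` the discriminant becomes `Δ = d² (-1)ⁿ ∏ q(eᵢ)`, where `d` is the
determinant of the change of basis, so `ω = d • e₁ ⋯ e₂ₙ` satisfies `ω² = Δ`; it anticommutes
with `V`, hence is central in `C₀(q)`. Left multiplication by `C(q)` and right multiplication by
`ω` (standing for `√Δ`) commute and preserve `C₀(q)`-linearity, which gives
`C(q) ⊗ L → End_{C₀(q)}(C(q))`. For an anisotropic `u ∈ V` we have `C(q) = C₀(q) ⊕ u C₀(q)`, so a
`C₀(q)`-linear endomorphism is determined by its values at `1` and `u`, and these can be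
prescribed freely. The element `x ⊗ 1 + y ⊗ √Δ` sends `1 ↦ x + yω` and `u ↦ (x - yω)u`, and
`(x, y) ↦ (x + yω, x - yω)` is bijective because `2` and `Δ` are invertible.
-/

open scoped TensorProduct

/-- The endomorphism algebra `End_{C₀(q)}(C₀(q) ⊕ C₁(q))`: the subalgebra of
`End_K(C(q))` consisting of the `K`-linear endomorphisms of `C(q) = C₀(q) ⊕ C₁(q)` that
commute with right multiplication by elements of the even Clifford algebra `C₀(q)`. -/
def evenCliffordRightEnd {K : Type*} [Field K] {V : Type*} [AddCommGroup V] [Module K V]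
    (Q : QuadraticForm K V) : Subalgebra K (Module.End K (CliffordAlgebra Q)) where
  carrier := {f | ∀ z : CliffordAlgebra Q, ∀ s ∈ CliffordAlgebra.even Q, f (z * s) = f z * s}
  mul_mem' := by
    intro f g hf hg z s hs
    simp only [Module.End.mul_apply]
    rw [hg z s hs, hf (g z) s hs]
  one_mem' := by intro z s hs; rfl
  add_mem' := by
    intro f g hf hg z s hs
    simp only [LinearMap.add_apply, hf z s hs, hg z s hs, add_mul]
  zero_mem' := by intro z s hs; simp
  algebraMap_mem' := by
    intro r z s hs
    simp [Module.algebraMap_end_apply, smul_mul_assoc]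

open Polynomial

section ListProd

variable {R A : Type*} [CommRing R] [Ring A] [Algebra R A]

theorem List.prod_ofFn_mul_eq_smul_mul {m : ℕ} (a : Fin m → A) (c : A) (ε : Fin m → R)
    (h : ∀ i, a i * c = ε i • (c * a i)) :
    (List.ofFn a).prod * c = (∏ i, ε i) • (c * (List.ofFn a).prod) := by
  induction m with
  | zero => simp
  | succ m ih =>
    rw [List.ofFn_succ, List.prod_cons, Fin.prod_univ_succ, mul_assoc,
      ih (fun i => a i.succ) (fun i => ε i.succ) (fun i => h i.succ), mul_smul_comm,
      ← mul_assoc, h 0, smul_mul_assoc, smul_smul, mul_comm (ε 0), mul_assoc]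

theorem List.prod_ofFn_mul_self {m : ℕ} (a : Fin m → A) (r : Fin m → R)
    (hsq : ∀ i, a i * a i = algebraMap R A (r i))
    (hanti : _root_.Pairwise fun i j => a i * a j = -(a j * a i)) :
    (List.ofFn a).prod * (List.ofFn a).prod
      = algebraMap R A ((-1) ^ m.choose 2 * ∏ i, r i) := by
  induction m with
  | zero => simp
  | succ m ih =>
    have hswap : (List.ofFn fun i => a i.succ).prod * a 0
        = (-1 : R) ^ m • (a 0 * (List.ofFn fun i => a i.succ).prod) := by
      simpa using List.prod_ofFn_mul_eq_smul_mul (fun i => a i.succ) (a 0) (fun _ => (-1 : R))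
        (fun i => by rw [hanti (Fin.succ_ne_zero i), neg_one_smul])
    rw [List.ofFn_succ, List.prod_cons, Fin.prod_univ_succ, mul_assoc, ← mul_assoc _ (a 0),
      hswap, smul_mul_assoc, mul_smul_comm, ← mul_assoc, ← mul_assoc, hsq,
      mul_assoc, ih (fun i => a i.succ) (fun i => r i.succ) (fun i => hsq i.succ)
        (fun i j hij => hanti (Fin.succ_injective _ |>.ne hij)),
      ← map_mul, Algebra.smul_def, ← map_mul, Nat.choose_succ_succ', Nat.choose_one_right,
      pow_add]
    congr 1
    ring

end ListProd

theorem neg_one_pow_choose_two_two_mul {M : Type*} [Monoid M] [HasDistribNeg M] (n : ℕ) :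
    (-1 : M) ^ (2 * n).choose 2 = (-1) ^ n := by
  have : (2 * n).choose 2 = n + 2 * (n * (n - 1)) := by
    rw [Nat.choose_two_right]
    rcases n with _ | n
    · rfl
    · rw [Nat.add_sub_cancel, Nat.mul_sub_one, Nat.div_eq_of_eq_mul_left two_pos]
      ring_nf
      omega
  rw [this, pow_add, pow_mul, neg_one_sq, one_pow, mul_one]

namespace CliffordAlgebra

variable {R M : Type*} [CommRing R] [AddCommGroup M] [Module R M] {Q : QuadraticForm R M}

variable (Q) in
def volumeElement {m : ℕ} (e : Fin m → M) : CliffordAlgebra Q :=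
  (List.ofFn fun i => ι Q (e i)).prod

section Volume

variable {m : ℕ} {e : Fin m → M}

theorem volumeElement_mul_self (he : Pairwise fun i j => Q.IsOrtho (e i) (e j)) :
    volumeElement Q e * volumeElement Q e
      = algebraMap R _ ((-1) ^ m.choose 2 * ∏ i, Q (e i)) :=
  List.prod_ofFn_mul_self _ _ (fun i => ι_sq_scalar Q (e i))
    (fun _ _ hij => ι_mul_ι_comm_of_isOrtho (he hij))

theorem volumeElement_mul_ι_apply (he : Pairwise fun i j => Q.IsOrtho (e i) (e j))
    (hm : Even m) (j : Fin m) :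
    volumeElement Q e * ι Q (e j) = -(ι Q (e j) * volumeElement Q e) := by
  have hsign : ∏ i, (if i = j then 1 else -1 : R) = -1 := by
    obtain ⟨k, rfl⟩ := hm
    have hk : 0 < k := by have := j.pos; omega
    rw [← Finset.mul_prod_erase _ _ (Finset.mem_univ j), if_pos rfl, one_mul,
      Finset.prod_congr rfl fun i hi => if_neg (Finset.ne_of_mem_erase hi), Finset.prod_const,
      Finset.card_erase_of_mem (Finset.mem_univ j), Finset.card_univ, Fintype.card_fin]
    exact Odd.neg_one_pow ⟨k - 1, by omega⟩
  rw [volumeElement, List.prod_ofFn_mul_eq_smul_mul _ _ (fun i => if i = j then (1 : R) else -1),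
    hsign, neg_one_smul]
  intro i
  split_ifs with hij
  · rw [hij, one_smul]
  · rw [ι_mul_ι_comm_of_isOrtho (he hij), neg_one_smul]

theorem volumeElement_mul_ι (b : Module.Basis (Fin m) R M)
    (hb : Pairwise fun i j => Q.IsOrtho (b i) (b j)) (hm : Even m) (v : M) :
    volumeElement Q b * ι Q v = -(ι Q v * volumeElement Q b) := by
  have : (LinearMap.mulLeft R (volumeElement Q b)).comp (ι Q)
      = -(LinearMap.mulRight R (volumeElement Q b)).comp (ι Q) :=
    b.ext fun j => volumeElement_mul_ι_apply hb hm j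
  exact LinearMap.congr_fun this v

end Volume

theorem commute_of_mem_even {ω : CliffordAlgebra Q} (hω : ∀ v, ω * ι Q v = -(ι Q v * ω))
    {s : CliffordAlgebra Q} (hs : s ∈ even Q) : Commute ω s := by
  induction s, hs using even_induction with
  | algebraMap r => exact Algebra.commute_algebraMap_right r ω
  | add x y _ _ hx hy => exact hx.add_right hy
  | ι_mul_ι_mul m₁ m₂ x _ hx =>
    refine Commute.mul_right ?_ hx
    show ω * (ι Q m₁ * ι Q m₂) = ι Q m₁ * ι Q m₂ * ω
    rw [← mul_assoc, hω, neg_mul, mul_assoc, hω, mul_neg, neg_neg, mul_assoc]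

theorem exists_eq_add_ι_mul {v : M} (hv : IsUnit (Q v)) (z : CliffordAlgebra Q) :
    ∃ s₀ ∈ even Q, ∃ s₁ ∈ even Q, z = s₀ + ι Q v * s₁ := by
  obtain ⟨z₀, hz₀, z₁, hz₁, rfl⟩ :=
    Submodule.mem_sup.mp ((evenOdd_isCompl Q).codisjoint.eq_top ▸ Submodule.mem_top (x := z))
  refine ⟨z₀, hz₀, (↑hv.unit⁻¹ : R) • (ι Q v * z₁), ?_, ?_⟩
  · exact Submodule.smul_mem _ _
      ((by decide : (1 : ZMod 2) + 1 = 0) ▸ SetLike.mul_mem_graded (ι_mem_evenOdd_one Q v) hz₁)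
  · rw [mul_smul_comm, ← mul_assoc, ι_sq_scalar, ← Algebra.smul_def, smul_smul,
      IsUnit.val_inv_mul, one_smul]

end CliffordAlgebra

namespace AdjoinRoot

variable {R A : Type*} [CommRing R] [Ring A] [Algebra R A] {g : R[X]}

/-- `AdjoinRoot.liftAlgHom` for a possibly noncommutative target. -/
noncomputable def liftOfAeval (g : R[X]) (x : A) (hx : aeval x g = 0) : AdjoinRoot g →ₐ[R] A :=
  Ideal.Quotient.liftₐ _ (aeval x) fun p hp => by
    obtain ⟨c, rfl⟩ := Ideal.mem_span_singleton'.mp hp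
    rw [map_mul, hx, mul_zero]

theorem liftOfAeval_mk (x : A) (hx : aeval x g = 0) (p : R[X]) :
    liftOfAeval g x hx (mk g p) = aeval x p :=
  Ideal.Quotient.lift_mk _ _ _

@[simp]
theorem liftOfAeval_root (x : A) (hx : aeval x g = 0) : liftOfAeval g x hx (root g) = x := by
  rw [root, liftOfAeval_mk, aeval_X]

theorem commute_liftOfAeval {x a : A} (hx : aeval x g = 0) (h : Commute x a) (y : AdjoinRoot g) :
    Commute (liftOfAeval g x hx y) a := by
  induction y using AdjoinRoot.induction_on with
  | ih p => rw [liftOfAeval_mk, aeval_eq_smeval]; exact smeval_commute_left R p h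

theorem exists_eq_algebraMap_add_smul_root [Nontrivial R] (hg : g.Monic) (h2 : g.natDegree = 2)
    (y : AdjoinRoot g) : ∃ a b : R, y = algebraMap R _ a + b • root g := by
  obtain ⟨p, rfl⟩ := mk_surjective y
  have hdeg : (p %ₘ g).natDegree ≤ 1 := by
    have := natDegree_modByMonic_lt p hg (by rintro rfl; simp at h2)
    omega
  obtain ⟨b, a, hp⟩ := exists_eq_X_add_C_of_natDegree_le_one hdeg
  refine ⟨a, b, ?_⟩
  rw [← mk_leftInverse hg (mk g p), modByMonicHom_mk, hp, map_add, map_mul, mk_X, mk_C, mk_C,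
    Algebra.smul_def, add_comm]
  rfl

theorem _root_.TensorProduct.exists_eq_tmul_one_add_tmul_root {M : Type*} [AddCommGroup M]
    [Module R M] [Nontrivial R] (hg : g.Monic) (h2 : g.natDegree = 2) (t : M ⊗[R] AdjoinRoot g) :
    ∃ x y : M, t = x ⊗ₜ 1 + y ⊗ₜ root g := by
  induction t using TensorProduct.induction_on with
  | zero => exact ⟨0, 0, by simp⟩
  | tmul x y =>
    obtain ⟨a, b, rfl⟩ := exists_eq_algebraMap_add_smul_root hg h2 y
    refine ⟨a • x, b • x, ?_⟩
    rw [TensorProduct.tmul_add, Algebra.algebraMap_eq_smul_one, TensorProduct.tmul_smul,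
      TensorProduct.tmul_smul, TensorProduct.smul_tmul', TensorProduct.smul_tmul']
  | add t₁ t₂ h₁ h₂ =>
    obtain ⟨x₁, y₁, rfl⟩ := h₁
    obtain ⟨x₂, y₂, rfl⟩ := h₂
    exact ⟨x₁ + x₂, y₁ + y₂, by simp only [TensorProduct.add_tmul]; abel⟩

end AdjoinRoot

theorem bijective_add_mul_sub_mul {K A : Type*} [Field K] [Ring A] [Algebra K A]
    [Invertible (2 : K)] {Δ : K} (hΔ : Δ ≠ 0) {ω : A} (hω : ω * ω = algebraMap K A Δ) :
    Function.Bijective fun p : A × A => (p.1 + p.2 * ω, p.1 - p.2 * ω) := by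
  refine ⟨fun p q hpq => ?_, fun ⟨a, c⟩ => ?_⟩
  · obtain ⟨hsum, hdiff⟩ := Prod.mk.inj hpq
    have h₂ : (2 : K) • p.1 = (2 : K) • q.1 := by
      rw [two_smul, two_smul]
      calc p.1 + p.1 = (p.1 + p.2 * ω) + (p.1 - p.2 * ω) := by abel
        _ = (q.1 + q.2 * ω) + (q.1 - q.2 * ω) := by rw [hsum, hdiff]
        _ = q.1 + q.1 := by abel
    have h₁ := smul_right_injective A (Invertible.ne_zero (2 : K)) h₂
    have hω' : p.2 * ω = q.2 * ω := by rwa [h₁, add_right_inj] at hsum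
    have hΔ' : Δ • p.2 = Δ • q.2 := by
      rw [Algebra.smul_def, Algebra.commutes, ← hω, ← mul_assoc, hω', mul_assoc, hω,
        ← Algebra.commutes, ← Algebra.smul_def]
    exact Prod.ext h₁ (smul_right_injective A hΔ hΔ')
  · refine ⟨(⅟(2 : K) • (a + c), (⅟(2 : K) * Δ⁻¹) • ((a - c) * ω)), ?_⟩
    have hy : (⅟(2 : K) * Δ⁻¹) • ((a - c) * ω) * ω = ⅟(2 : K) • (a - c) := by
      rw [smul_mul_assoc, mul_assoc, hω, ← Algebra.commutes, ← Algebra.smul_def, smul_smul,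
        mul_assoc, inv_mul_cancel₀ hΔ, mul_one]
    simp only [hy, Prod.mk.injEq, ← smul_add, ← smul_sub]
    constructor
    · rw [add_add_sub_cancel, ← two_smul K a, smul_smul, invOf_mul_self, one_smul]
    · rw [add_sub_sub_cancel, ← two_smul K c, smul_smul, invOf_mul_self, one_smul]

namespace evenCliffordRightEnd

open CliffordAlgebra

variable {K V : Type*} [Field K] [AddCommGroup V] [Module K V] {Q : QuadraticForm K V}

theorem apply_add_ι_mul {f : Module.End K (CliffordAlgebra Q)} (hf : f ∈ evenCliffordRightEnd Q)
    (v : V) {s₀ s₁ : CliffordAlgebra Q} (h₀ : s₀ ∈ even Q) (h₁ : s₁ ∈ even Q) :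
    f (s₀ + ι Q v * s₁) = f 1 * s₀ + f (ι Q v) * s₁ := by
  rw [map_add, ← hf 1 s₀ h₀, one_mul, hf _ s₁ h₁]

theorem ext_of_apply_ι {v : V} (hv : Q v ≠ 0) {f g : evenCliffordRightEnd Q}
    (h₁ : (f : Module.End K (CliffordAlgebra Q)) 1 = (g : Module.End K _) 1)
    (hι : (f : Module.End K (CliffordAlgebra Q)) (ι Q v) = (g : Module.End K _) (ι Q v)) :
    f = g := by
  refine Subtype.ext (LinearMap.ext fun z => ?_)
  obtain ⟨s₀, h₀, s₁, h₁', rfl⟩ := exists_eq_add_ι_mul hv.isUnit z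
  rw [apply_add_ι_mul f.2 v h₀ h₁', apply_add_ι_mul g.2 v h₀ h₁', h₁, hι]

noncomputable def mulLeft : CliffordAlgebra Q →ₐ[K] evenCliffordRightEnd Q :=
  (Algebra.lmul K _).codRestrict _ fun x z s _ => (mul_assoc x z s).symm

@[simp]
theorem mulLeft_apply (x z : CliffordAlgebra Q) :
    (mulLeft x : Module.End K (CliffordAlgebra Q)) z = x * z :=
  rfl

def mulRight (ω : CliffordAlgebra Q) (hω : ∀ s ∈ even Q, Commute ω s) :
    evenCliffordRightEnd Q :=
  ⟨LinearMap.mulRight K ω, fun z s hs => by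
    simp only [LinearMap.mulRight_apply, mul_assoc, (hω s hs).eq]⟩

@[simp]
theorem mulRight_apply (ω : CliffordAlgebra Q) (hω : ∀ s ∈ even Q, Commute ω s)
    (z : CliffordAlgebra Q) : (mulRight ω hω : Module.End K (CliffordAlgebra Q)) z = z * ω :=
  rfl

theorem commute_mulRight_mulLeft (ω : CliffordAlgebra Q) (hω : ∀ s ∈ even Q, Commute ω s)
    (x : CliffordAlgebra Q) : Commute (mulRight ω hω) (mulLeft x) :=
  Subtype.ext (LinearMap.ext fun z => mul_assoc x z ω)

theorem aeval_mulRight_X_sq_sub_C {ω : CliffordAlgebra Q} (hω : ∀ s ∈ even Q, Commute ω s)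
    {Δ : K} (hω₂ : ω * ω = algebraMap K _ Δ) : aeval (mulRight ω hω) (X ^ 2 - C Δ) = 0 := by
  rw [map_sub, aeval_X_pow, aeval_C, sub_eq_zero]
  refine Subtype.ext (LinearMap.ext fun z => ?_)
  simp [pow_two, mul_assoc, hω₂, Algebra.smul_def, Algebra.commutes]

variable {Δ : K} {ω : CliffordAlgebra Q}
  (hω : ∀ v, ω * ι Q v = -(ι Q v * ω)) (hω₂ : ω * ω = algebraMap K _ Δ)

noncomputable def baseChangeHom :
    CliffordAlgebra Q ⊗[K] AdjoinRoot (X ^ 2 - C Δ) →ₐ[K] evenCliffordRightEnd Q :=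
  have hω' : ∀ s ∈ even Q, Commute ω s := fun _ => commute_of_mem_even hω
  Algebra.TensorProduct.lift mulLeft
    (AdjoinRoot.liftOfAeval _ (mulRight ω hω') (aeval_mulRight_X_sq_sub_C hω' hω₂)) fun x y =>
      (AdjoinRoot.commute_liftOfAeval _ (commute_mulRight_mulLeft ω hω' x) y).symm

@[simp]
theorem baseChangeHom_tmul_one (x : CliffordAlgebra Q) :
    baseChangeHom hω hω₂ (x ⊗ₜ 1) = mulLeft x := by
  simp [baseChangeHom]

theorem baseChangeHom_apply (x y z : CliffordAlgebra Q) :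
    (baseChangeHom hω hω₂ (x ⊗ₜ 1 + y ⊗ₜ AdjoinRoot.root _) : Module.End K (CliffordAlgebra Q)) z
      = x * z + y * (z * ω) := by
  simp [baseChangeHom]

theorem baseChangeHom_bijective [Invertible (2 : K)] (hΔ : Δ ≠ 0) {v : V} (hv : Q v ≠ 0) :
    Function.Bijective (baseChangeHom hω hω₂) := by
  have hu : IsUnit (ι Q v) := (isUnit_ι_iff Q).mpr hv.isUnit
  have eval_one (x y : CliffordAlgebra Q) :
      (baseChangeHom hω hω₂ (x ⊗ₜ 1 + y ⊗ₜ AdjoinRoot.root _) : Module.End K _) 1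
        = x + y * ω := by
    rw [baseChangeHom_apply, mul_one, one_mul]
  have eval_ι (x y : CliffordAlgebra Q) :
      (baseChangeHom hω hω₂ (x ⊗ₜ 1 + y ⊗ₜ AdjoinRoot.root _) : Module.End K _) (ι Q v)
        = (x - y * ω) * ι Q v := by
    rw [baseChangeHom_apply, ← neg_neg (ι Q v * ω), ← hω, mul_neg, ← mul_assoc, sub_mul,
      sub_eq_add_neg]
  have hpair := bijective_add_mul_sub_mul hΔ hω₂
  have hrep := TensorProduct.exists_eq_tmul_one_add_tmul_root
    (M := CliffordAlgebra Q) (monic_X_pow_sub_C Δ two_ne_zero) natDegree_X_pow_sub_C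
  refine ⟨fun t₁ t₂ h => ?_, fun f => ?_⟩
  · obtain ⟨x₁, y₁, rfl⟩ := hrep t₁
    obtain ⟨x₂, y₂, rfl⟩ := hrep t₂
    have h₁ := congr($h.1 1)
    have hι := congr($h.1 (ι Q v))
    rw [eval_one, eval_one] at h₁
    rw [eval_ι, eval_ι] at hι
    obtain ⟨rfl, rfl⟩ := Prod.mk.inj (hpair.1 (Prod.ext h₁ (hu.mul_left_injective hι) :
      (x₁ + y₁ * ω, x₁ - y₁ * ω) = (x₂ + y₂ * ω, x₂ - y₂ * ω)))
    rfl
  · obtain ⟨⟨x, y⟩, hxy⟩ := hpair.2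
      ((f : Module.End K _) 1, (f : Module.End K _) (ι Q v) * Ring.inverse (ι Q v))
    obtain ⟨h₁, hι⟩ := Prod.mk.inj hxy
    refine ⟨x ⊗ₜ 1 + y ⊗ₜ AdjoinRoot.root _, ext_of_apply_ι hv ?_ ?_⟩
    · rw [eval_one, h₁]
    · rw [eval_ι, hι, Ring.inverse_mul_cancel_right _ _ hu]

end evenCliffordRightEnd

theorem LinearMap.BilinForm.det_toMatrix₂_of_isOrthoᵢ {R M ι : Type*} [CommRing R]
    [AddCommGroup M] [Module R M] [Fintype ι] [DecidableEq ι] {B : LinearMap.BilinForm R M}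
    (b e : Module.Basis ι R M) (he : B.IsOrthoᵢ e) :
    (toMatrix₂ b b B).det = (e.toMatrix b).det ^ 2 * ∏ i, B (e i) (e i) := by
  have hdiag : toMatrix₂ e e B = Matrix.diagonal fun i => B (e i) (e i) := by
    ext i j
    rcases eq_or_ne i j with rfl | hij
    · rw [toMatrix₂_apply, Matrix.diagonal_apply_eq]
    · rw [toMatrix₂_apply, Matrix.diagonal_apply_ne _ hij, he hij]
  rw [← toMatrix₂_mul_basis_toMatrix e e b b B, Matrix.det_mul, Matrix.det_mul,
    Matrix.det_transpose, hdiag, Matrix.det_diagonal]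
  ring

theorem QuadraticForm.exists_basis_isOrtho_det_toMatrix₂ {K V ι : Type*} [Field K]
    [Invertible (2 : K)] [AddCommGroup V] [Module K V] [Fintype ι] [DecidableEq ι]
    (Q : QuadraticForm K V) (b : Module.Basis ι K V) :
    ∃ e : Module.Basis ι K V, (Pairwise fun i j => Q.IsOrtho (e i) (e j)) ∧
      ∃ d : K, (LinearMap.toMatrix₂ b b Q.associated).det = d ^ 2 * ∏ i, Q (e i) := by
  have := b.finiteDimensional_of_finite
  obtain ⟨e, he⟩ := LinearMap.BilinForm.exists_orthogonal_basis (B := Q.associated)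
    ⟨QuadraticMap.associated_isSymm K Q⟩
  let σ := Fintype.equivFinOfCardEq (Module.finrank_eq_card_basis b).symm
  let e' := e.reindex σ.symm
  have he' : Q.associated.IsOrthoᵢ e' := fun i j hij => by
    simp only [e', Module.Basis.coe_reindex, Equiv.symm_symm]
    exact he (σ.injective.ne hij)
  refine ⟨e', fun i j hij => QuadraticMap.associated_isOrtho.mp (he' hij), (e'.toMatrix b).det,
    (LinearMap.BilinForm.det_toMatrix₂_of_isOrthoᵢ b e' he').trans ?_⟩
  simp only [QuadraticMap.associated_eq_self_apply]

open CliffordAlgebra in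
theorem clifford_base_change_even_end_general (K : Type*) [Field K] [Invertible (2 : K)]
    (V : Type*) [AddCommGroup V] [Module K V]
    (n : ℕ)
    (Q : QuadraticForm K V)
    (b : Module.Basis (Fin (2 * n)) K V)
    (Δ : K)
    (hΔdef : Δ = (-1) ^ n * (LinearMap.toMatrix₂ b b (QuadraticMap.associated Q)).det)
    (hΔ : ∀ t : K, t ^ 2 ≠ Δ) :
    ∃ φ : (CliffordAlgebra Q ⊗[K]
            AdjoinRoot (Polynomial.X ^ 2 - Polynomial.C Δ)) ≃ₐ[K] evenCliffordRightEnd Q,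
      ∀ (v : V) (z : CliffordAlgebra Q),
        (φ (CliffordAlgebra.ι Q v ⊗ₜ[K] 1) : Module.End K (CliffordAlgebra Q)) z
          = CliffordAlgebra.ι Q v * z := by
  obtain ⟨e, he, d, hdet⟩ := Q.exists_basis_isOrtho_det_toMatrix₂ b
  have hΔe : Δ = d ^ 2 * ((-1) ^ (2 * n).choose 2 * ∏ i, Q (e i)) := by
    rw [hΔdef, hdet, neg_one_pow_choose_two_two_mul]
    ring
  have hΔ₀ : Δ ≠ 0 := fun h => hΔ 0 (by rw [h, zero_pow two_ne_zero])
  have hn : 0 < 2 * n := by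
    refine Nat.pos_of_ne_zero fun h => hΔ 1 ?_
    have : IsEmpty (Fin (2 * n)) := h ▸ Fin.isEmpty'
    rw [hΔdef, Matrix.det_isEmpty, show n = 0 by omega, pow_zero, one_pow, mul_one]
  have hv : Q (e ⟨0, hn⟩) ≠ 0 := fun h =>
    hΔ₀ (by rw [hΔe, Finset.prod_eq_zero (i := ⟨0, hn⟩) (Finset.mem_univ _) h, mul_zero, mul_zero])
  let ω := d • volumeElement Q e
  have hω (v : V) : ω * ι Q v = -(ι Q v * ω) := by
    rw [smul_mul_assoc, volumeElement_mul_ι e he (even_two_mul n), mul_smul_comm, smul_neg]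
  have hω₂ : ω * ω = algebraMap K _ Δ := by
    rw [smul_mul_smul_comm, volumeElement_mul_self he, Algebra.smul_def, ← map_mul, hΔe, pow_two]
  refine ⟨AlgEquiv.ofBijective _ (evenCliffordRightEnd.baseChangeHom_bijective hω hω₂ hΔ₀ hv),
    fun v z => ?_⟩
  rw [AlgEquiv.ofBijective_apply, evenCliffordRightEnd.baseChangeHom_tmul_one,
    evenCliffordRightEnd.mulLeft_apply]

/-- Let `q` be a nondegenerate quadratic form of even rank `2n` over a
field `K` of characteristic `≠ 2` whose signed discriminant `Δ = (−1)ⁿ det M` (for a Gram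
matrix `M`) is not a square, and let `L = K[X]/(X² − Δ)`.  Then the map sending `v ⊗ 1`
to left multiplication by `v` extends to a `K`-algebra isomorphism
`C(q) ⊗_K L ≅ End_{C₀(q)}(C₀(q) ⊕ C₁(q))`.  (Consequently `c₀(q) = c(q) ⊗_K L` in
`Br(L)`.) -/
theorem clifford_base_change_even_end (K : Type*) [Field K] [Invertible (2 : K)]
    (V : Type*) [AddCommGroup V] [Module K V] [FiniteDimensional K V]
    (n : ℕ) (hn : Module.finrank K V = 2 * n)
    (Q : QuadraticForm K V)
    (hQ : ∀ v : V, (∀ w : V, QuadraticMap.polar Q v w = 0) → v = 0)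
    (b : Module.Basis (Fin (2 * n)) K V)
    (Δ : K)
    (hΔdef : Δ = (-1) ^ n * (LinearMap.toMatrix₂ b b (QuadraticMap.associated Q)).det)
    (hΔ : ∀ t : K, t ^ 2 ≠ Δ) :
    ∃ φ : (CliffordAlgebra Q ⊗[K]
            AdjoinRoot (Polynomial.X ^ 2 - Polynomial.C Δ)) ≃ₐ[K] evenCliffordRightEnd Q,
      ∀ (v : V) (z : CliffordAlgebra Q),
        (φ (CliffordAlgebra.ι Q v ⊗ₜ[K] 1) : Module.End K (CliffordAlgebra Q)) z
          = CliffordAlgebra.ι Q v * z :=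
  clifford_base_change_even_end_general K V n Q b Δ hΔdef hΔ
end

section
/- Let a₁, …, a₆ be nonzero real numbers with a₁a₂a₃a₄a₅a₆ < 0. Then the ℝ-algebra (−a₁a₂, −a₁a₃)_ℝ ⊗_ℝ (a₁a₂a₃a₄, a₁a₂a₃a₅)_ℝ is isomorphic to the matrix algebra M₄(ℝ) if and only if exactly three of a₁, …, a₆ are negative; otherwise (i.e., if exactly one or exactly five of them are negative) it is isomorphic to M₂(ℍ), where ℍ = (−1,−1)_ℝ is the Hamilton quaternions, and in particular its Brauer class in Br(ℝ) ≅ ℤ/2ℤ is nontrivial. -/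
/-!
Over `ℝ` a quaternion algebra `(u, v)` with `u, v ≠ 0` is Hamilton's `ℍ` when `u, v < 0` and
`M₂(ℝ)` otherwise. Hence the biquaternion algebra is `ℍ ⊗ ℍ ≅ M₄(ℝ)` (as `ℍ` is Azumaya),
`M₂(ℝ) ⊗ M₂(ℝ) ≅ M₄(ℝ)`, or `ℍ ⊗ M₂(ℝ) ≅ M₂(ℍ)`; the first two cases occur exactly when both
or neither factor is `ℍ`, which a count of signs shows to mean that three of the `aᵢ` are
negative. Finally `M₄(ℝ) ≇ M₂(ℍ)`: the left ideal `M₄(ℝ) E₁₁` has real dimension `4`, while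
every nonzero principal left ideal of `M₂(ℍ)` contains a copy of `ℍ²` and so has dimension
at least `8`.
-/

open scoped Quaternion TensorProduct
open Module LinearMap MulOpposite

namespace QuaternionAlgebra

variable {K : Type*} [Field K]

def rescaleEquiv {c₁ c₂ s t : K} (hs : s ≠ 0) (ht : t ≠ 0) :
    ℍ[K, s ^ 2 * c₁, t ^ 2 * c₂] ≃ₐ[K] ℍ[K, c₁, c₂] where
  toFun x := ⟨x.re, s * x.imI, t * x.imJ, s * t * x.imK⟩
  invFun x := ⟨x.re, x.imI / s, x.imJ / t, x.imK / (s * t)⟩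
  left_inv x := by ext <;> field_simp
  right_inv x := by ext <;> field_simp
  map_mul' x y := by ext <;> simp <;> ring
  map_add' x y := by ext <;> simp <;> ring
  commutes' r := by ext <;> simp

/-- `i ↦ diag(s, -s)`, `j ↦ !![0, v; 1, 0]`. -/
def sqEquivMatrix [NeZero (2 : K)] {s v : K} (hs : s ≠ 0) (hv : v ≠ 0) :
    ℍ[K, s ^ 2, v] ≃ₐ[K] Matrix (Fin 2) (Fin 2) K where
  toFun x := !![x.re + s * x.imI, v * (x.imJ + s * x.imK); x.imJ - s * x.imK, x.re - s * x.imI]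
  invFun M := ⟨(M 0 0 + M 1 1) / 2, (M 0 0 - M 1 1) / (2 * s),
    (M 0 1 / v + M 1 0) / 2, (M 0 1 / v - M 1 0) / (2 * s)⟩
  left_inv x := by ext <;> simp <;> field_simp <;> ring
  right_inv M := by ext i j; fin_cases i <;> fin_cases j <;> simp <;> field_simp <;> ring
  map_mul' x y := by
    ext i j; fin_cases i <;> fin_cases j <;> simp [Matrix.mul_apply] <;> ring
  map_add' x y := by ext i j; fin_cases i <;> fin_cases j <;> simp <;> ring
  commutes' r := by ext i j; fin_cases i <;> fin_cases j <;> simp [Matrix.algebraMap_eq_diagonal]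

theorem nonempty_algEquiv_quaternion {u v : ℝ} (hu : u < 0) (hv : v < 0) :
    Nonempty (ℍ[ℝ, u, v] ≃ₐ[ℝ] ℍ[ℝ]) := by
  obtain ⟨s, hs, rfl⟩ : ∃ s : ℝ, s ≠ 0 ∧ u = s ^ 2 * -1 :=
    ⟨√(-u), (Real.sqrt_pos.2 (neg_pos.2 hu)).ne', by rw [Real.sq_sqrt (by linarith)]; ring⟩
  obtain ⟨t, ht, rfl⟩ : ∃ t : ℝ, t ≠ 0 ∧ v = t ^ 2 * -1 :=
    ⟨√(-v), (Real.sqrt_pos.2 (neg_pos.2 hv)).ne', by rw [Real.sq_sqrt (by linarith)]; ring⟩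
  exact ⟨rescaleEquiv hs ht⟩

theorem nonempty_algEquiv_matrix {u v : ℝ} (hu : u ≠ 0) (hv : v ≠ 0) (h : ¬(u < 0 ∧ v < 0)) :
    Nonempty (ℍ[ℝ, u, v] ≃ₐ[ℝ] Matrix (Fin 2) (Fin 2) ℝ) := by
  wlog hu_pos : 0 < u generalizing u v
  · have hu_neg : u < 0 := hu.lt_or_gt.resolve_right hu_pos
    have hv_pos : 0 < v := hv.lt_or_gt.resolve_left fun hv_neg => h ⟨hu_neg, hv_neg⟩
    obtain ⟨e⟩ := this hv hu (fun h' => h ⟨h'.2, h'.1⟩) hv_pos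
    exact ⟨(swapEquiv u v).trans e⟩
  obtain ⟨s, hs, rfl⟩ : ∃ s : ℝ, s ≠ 0 ∧ u = s ^ 2 :=
    ⟨√u, by positivity, (Real.sq_sqrt hu_pos.le).symm⟩
  exact ⟨sqEquivMatrix hs hv⟩

end QuaternionAlgebra

namespace Quaternion

def oneIJK : Fin 4 → ℍ[ℝ] := ![1, ⟨0, 1, 0, 0⟩, ⟨0, 0, 1, 0⟩, ⟨0, 0, 0, 1⟩]

theorem linearIndependent_mulLeftRight_oneIJK :
    LinearIndependent ℝ fun pq : Fin 4 × Fin 4 =>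
      AlgHom.mulLeftRight ℝ ℍ[ℝ] (oneIJK pq.1 ⊗ₜ op (oneIJK pq.2)) := by
  rw [Fintype.linearIndependent_iff]
  intro g hg
  have key (r : Fin 4) := LinearMap.congr_fun hg (oneIJK r)
  simp only [LinearMap.sum_apply, LinearMap.smul_apply, AlgHom.mulLeftRight_apply, unop_op,
    LinearMap.zero_apply] at key
  have k₀ := key 0
  have k₁ := key 1
  have k₂ := key 2
  have k₃ := key 3
  -- expand the components before unfolding `oneIJK`, so that the `ℍ[ℝ]` lemmas still apply
  simp only [Fintype.sum_prod_type, Fin.sum_univ_four, Quaternion.ext_iff, re_add, imI_add,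
    imJ_add, imK_add, re_mul, imI_mul, imJ_mul, imK_mul, re_smul, imI_smul, imJ_smul,
    imK_smul] at k₀ k₁ k₂ k₃
  simp [oneIJK] at k₀ k₁ k₂ k₃
  intro p
  fin_cases p <;> simp <;> linarith

theorem mulLeftRight_surjective : Function.Surjective (AlgHom.mulLeftRight ℝ ℍ[ℝ]) := by
  have hspan := linearIndependent_mulLeftRight_oneIJK.span_eq_top_of_card_eq_finrank'
    (by simp [finrank_linearMap, finrank_eq_four])
  have hrange : range (AlgHom.mulLeftRight ℝ ℍ[ℝ]).toLinearMap = ⊤ :=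
    top_unique <| hspan ▸ Submodule.span_le.2 (Set.range_subset_iff.2 fun _ => ⟨_, rfl⟩)
  exact range_eq_top.1 hrange

instance : IsAzumaya ℝ ℍ[ℝ] where
  bij := ⟨(injective_iff_surjective_of_finrank_eq_finrank
      (f := (AlgHom.mulLeftRight ℝ ℍ[ℝ]).toLinearMap)
      (by simp [finrank_tensorProduct, MulOpposite.finrank, finrank_linearMap,
        finrank_eq_four])).2 mulLeftRight_surjective, mulLeftRight_surjective⟩

noncomputable def tensorEquivMatrix : ℍ[ℝ] ⊗[ℝ] ℍ[ℝ] ≃ₐ[ℝ] Matrix (Fin 4) (Fin 4) ℝ :=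
  (Algebra.TensorProduct.congr AlgEquiv.refl starAe).trans <|
    (AlgEquiv.ofBijective _ (IsAzumaya.AlgHom.mulLeftRight_bij ℝ ℍ[ℝ])).trans <|
      algEquivMatrix (QuaternionAlgebra.basisOneIJK (-1 : ℝ) 0 (-1))

end Quaternion

theorem AlgEquiv.finrank_range_mulRight {K A B : Type*} [Field K] [Ring A] [Ring B]
    [Algebra K A] [Algebra K B] (φ : A ≃ₐ[K] B) (x : A) :
    finrank K (range (mulRight K (φ x))) = finrank K (range (mulRight K x)) := by
  have hconj : mulRight K (φ x) =
      (φ.toLinearEquiv.toLinearMap ∘ₗ mulRight K x) ∘ₗ φ.symm.toLinearEquiv.toLinearMap := by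
    ext y; simp
  rw [hconj, range_comp_of_range_eq_top _ (range_eq_top.2 φ.symm.surjective), range_comp,
    LinearEquiv.finrank_map_eq]

namespace Matrix

variable {K D : Type*} [Field K] {n : Type*} [Fintype n]

theorem finrank_range_mulRight_vecMulVec_le [Ring D] [Algebra K D] [FiniteDimensional K D]
    (u w : n → D) :
    finrank K (range (mulRight K (vecMulVec u w))) ≤ Fintype.card n * finrank K D :=
  calc finrank K (range (mulRight K (vecMulVec u w)))
      ≤ finrank K (range ((vecMulVecBilin K K).flip w)) :=
        Submodule.finrank_mono <| by
          rintro _ ⟨x, rfl⟩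
          exact ⟨x *ᵥ u, (mul_vecMulVec x u w).symm⟩
    _ ≤ finrank K (n → D) := finrank_range_le _
    _ = Fintype.card n * finrank K D := by simp [finrank_pi_fintype]

theorem card_mul_finrank_le_finrank_range_mulRight [DecidableEq n] [DivisionRing D]
    [Algebra K D] [FiniteDimensional K D] {f : Matrix n n D} (hf : f ≠ 0) :
    Fintype.card n * finrank K D ≤ finrank K (range (mulRight K f)) := by
  obtain ⟨k, l, hkl⟩ : ∃ k l, f k l ≠ 0 := by
    by_contra! h
    exact hf (ext h)
  set ψ := (vecMulVecBilin K K).flip (f k) with hψ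
  have hinj : Function.Injective ψ := by
    rw [← ker_eq_bot, Submodule.eq_bot_iff]
    intro q hq
    funext i
    simpa [hψ, vecMulVec_apply, hkl] using congrFun (congrFun hq i) l
  calc Fintype.card n * finrank K D = finrank K (n → D) := by simp [finrank_pi_fintype]
    _ = finrank K (range ψ) := (finrank_range_of_inj hinj).symm
    _ ≤ finrank K (range (mulRight K f)) :=
        Submodule.finrank_mono <| by
          rintro _ ⟨q, rfl⟩
          exact ⟨vecMulVec q (Pi.single k 1), by simp [hψ, vecMulVec_mul, single_vecMul, row]⟩

theorem isEmpty_algEquiv_of_card_lt {m : Type*} [Fintype m] [DecidableEq m] [Nonempty m]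
    [DecidableEq n] [DivisionRing D] [Algebra K D] [FiniteDimensional K D]
    (h : Fintype.card m < Fintype.card n * finrank K D) :
    IsEmpty (Matrix m m K ≃ₐ[K] Matrix n n D) := by
  refine ⟨fun φ => ?_⟩
  inhabit m
  let e : Matrix m m K := vecMulVec (Pi.single default 1) (Pi.single default 1)
  have he : e ≠ 0 := fun h => by
    simpa [e, vecMulVec_apply] using congrFun (congrFun h default) default
  have hle : finrank K (range (mulRight K e)) ≤ Fintype.card m * finrank K K :=
    finrank_range_mulRight_vecMulVec_le _ _
  have hge := card_mul_finrank_le_finrank_range_mulRight (K := K)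
    ((map_ne_zero_iff _ φ.injective).2 he)
  rw [φ.finrank_range_mulRight] at hge
  simp only [finrank_self, mul_one] at hle
  omega

end Matrix

section Biquaternion

open QuaternionAlgebra

variable {u v s t : ℝ}

theorem nonempty_tensor_algEquiv_matrix (hu : u ≠ 0) (hv : v ≠ 0) (hs : s ≠ 0) (ht : t ≠ 0)
    (h : (u < 0 ∧ v < 0) ↔ (s < 0 ∧ t < 0)) :
    Nonempty (ℍ[ℝ, u, v] ⊗[ℝ] ℍ[ℝ, s, t] ≃ₐ[ℝ] Matrix (Fin 4) (Fin 4) ℝ) := by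
  by_cases huv : u < 0 ∧ v < 0
  · obtain ⟨e₁⟩ := nonempty_algEquiv_quaternion huv.1 huv.2
    obtain ⟨e₂⟩ := nonempty_algEquiv_quaternion (h.1 huv).1 (h.1 huv).2
    exact ⟨(Algebra.TensorProduct.congr e₁ e₂).trans Quaternion.tensorEquivMatrix⟩
  · obtain ⟨e₁⟩ := nonempty_algEquiv_matrix hu hv huv
    obtain ⟨e₂⟩ := nonempty_algEquiv_matrix hs ht (mt h.2 huv)
    exact ⟨(Algebra.TensorProduct.congr e₁ e₂).trans <|
      (Matrix.kroneckerAlgEquiv (Fin 2) (Fin 2) ℝ).trans <|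
        Matrix.reindexAlgEquiv ℝ ℝ finProdFinEquiv⟩

theorem nonempty_tensor_algEquiv_matrix_quaternion (hu : u ≠ 0) (hv : v ≠ 0) (hs : s ≠ 0)
    (ht : t ≠ 0) (h : ¬((u < 0 ∧ v < 0) ↔ (s < 0 ∧ t < 0))) :
    Nonempty (ℍ[ℝ, u, v] ⊗[ℝ] ℍ[ℝ, s, t] ≃ₐ[ℝ] Matrix (Fin 2) (Fin 2) ℍ[ℝ]) := by
  by_cases huv : u < 0 ∧ v < 0
  · obtain ⟨e₁⟩ := nonempty_algEquiv_quaternion huv.1 huv.2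
    obtain ⟨e₂⟩ := nonempty_algEquiv_matrix hs ht (fun hst => h (iff_of_true huv hst))
    exact ⟨(Algebra.TensorProduct.congr e₁ e₂).trans (matrixEquivTensor (Fin 2) ℝ ℍ[ℝ]).symm⟩
  · have hst : s < 0 ∧ t < 0 := by_contra fun hst => h (iff_of_false huv hst)
    obtain ⟨e₁⟩ := nonempty_algEquiv_matrix hu hv huv
    obtain ⟨e₂⟩ := nonempty_algEquiv_quaternion hst.1 hst.2
    exact ⟨(Algebra.TensorProduct.congr e₁ e₂).trans <|
      (Algebra.TensorProduct.comm ℝ _ _).trans (matrixEquivTensor (Fin 2) ℝ ℍ[ℝ]).symm⟩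

end Biquaternion

section Signs

open Finset

set_option maxRecDepth 100000 in
theorem SignType.card_eq_neg_one_eq_three_iff (s : Fin 6 → SignType)
    (hprod : s 0 * s 1 * s 2 * s 3 * s 4 * s 5 = -1) :
    #{i | s i = -1} = 3 ↔
      ((s 0 * s 1 = 1 ∧ s 0 * s 2 = 1) ↔
        (s 0 * s 1 * s 2 * s 3 = -1 ∧ s 0 * s 1 * s 2 * s 4 = -1)) := by
  revert s; decide

theorem card_neg_eq_three_iff (a : Fin 6 → ℝ)
    (hprod : a 0 * a 1 * a 2 * a 3 * a 4 * a 5 < 0) :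
    #{i | a i < 0} = 3 ↔
      ((-(a 0 * a 1) < 0 ∧ -(a 0 * a 2) < 0) ↔
        (a 0 * a 1 * a 2 * a 3 < 0 ∧ a 0 * a 1 * a 2 * a 4 < 0)) := by
  rw [neg_lt_zero, neg_lt_zero]
  simp only [← sign_eq_one_iff, ← sign_eq_neg_one_iff, sign_mul] at hprod ⊢
  exact SignType.card_eq_neg_one_eq_three_iff (fun i => SignType.sign (a i)) hprod

end Signs

/-- Let `a₁, …, a₆` be nonzero reals with `a₁⋯a₆ < 0`.  The real
algebra `(−a₁a₂, −a₁a₃)_ℝ ⊗ (a₁a₂a₃a₄, a₁a₂a₃a₅)_ℝ` is isomorphic to `M₄(ℝ)` if and only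
if exactly three of the `aᵢ` are negative; and if exactly one or exactly five of them are
negative, it is isomorphic to `M₂(ℍ)`. -/
theorem real_biquaternion_signature (a : Fin 6 → ℝ) (ha : ∀ i, a i ≠ 0)
    (hprod : a 0 * a 1 * a 2 * a 3 * a 4 * a 5 < 0) :
    (Nonempty
        ((ℍ[ℝ, -(a 0 * a 1), -(a 0 * a 2)] ⊗[ℝ]
            ℍ[ℝ, a 0 * a 1 * a 2 * a 3, a 0 * a 1 * a 2 * a 4]) ≃ₐ[ℝ]
          Matrix (Fin 4) (Fin 4) ℝ) ↔
        (Finset.univ.filter fun i => a i < 0).card = 3) ∧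
      ((Finset.univ.filter fun i => a i < 0).card = 1 ∨
          (Finset.univ.filter fun i => a i < 0).card = 5 →
        Nonempty
          ((ℍ[ℝ, -(a 0 * a 1), -(a 0 * a 2)] ⊗[ℝ]
              ℍ[ℝ, a 0 * a 1 * a 2 * a 3, a 0 * a 1 * a 2 * a 4]) ≃ₐ[ℝ]
            Matrix (Fin 2) (Fin 2) ℍ[ℝ])) := by
  have hsign := card_neg_eq_three_iff a hprod
  have h₁ : -(a 0 * a 1) ≠ 0 := by simp [ha]
  have h₂ : -(a 0 * a 2) ≠ 0 := by simp [ha]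
  have h₃ : a 0 * a 1 * a 2 * a 3 ≠ 0 := by simp [ha]
  have h₄ : a 0 * a 1 * a 2 * a 4 ≠ 0 := by simp [ha]
  have hM₂ℍ := nonempty_tensor_algEquiv_matrix_quaternion h₁ h₂ h₃ h₄
  have hnot : IsEmpty (Matrix (Fin 4) (Fin 4) ℝ ≃ₐ[ℝ] Matrix (Fin 2) (Fin 2) ℍ[ℝ]) :=
    Matrix.isEmpty_algEquiv_of_card_lt (by simp [Quaternion.finrank_eq_four])
  refine ⟨⟨fun ⟨e⟩ => ?_, fun h3 => nonempty_tensor_algEquiv_matrix h₁ h₂ h₃ h₄ (hsign.1 h3)⟩,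
    fun h15 => hM₂ℍ fun h => by have := hsign.2 h; omega⟩
  by_contra h3
  obtain ⟨f⟩ := hM₂ℍ (mt hsign.2 h3)
  exact hnot.false (e.symm.trans f)
end

section
/- Let A: [0,1] → M₆(ℝ) be a continuous map such that A(t) is a symmetric matrix for every t ∈ [0,1]. Suppose that the set T = {t ∈ [0,1] : det A(t) = 0} is finite and that for every t ∈ T the kernel of A(t) is one-dimensional. If A(0) has exactly one negative eigenvalue (counted with multiplicity) and A(1) has exactly five negative eigenvalues, then there exists t ∈ [0,1] such that A(t) is invertible with exactly three negative and three positive eigenvalues, i.e., A(t) has signature (3,3). -/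
/-!
The number of negative (resp. positive) eigenvalues of a real symmetric matrix `M` is the largest
dimension of a subspace on which `x ↦ ⟪x, M x⟫` is negative (resp. positive) definite. Definiteness
on a fixed subspace survives small perturbations of `M` (its unit sphere is compact), so both
counts are lower semicontinuous along the path. As kernels have dimension at most one, the counts
`n(t)`, `p(t)` satisfy `n + p ≥ 5`, so `[0,1]` is covered by the open sets `{p ≥ 3} ∋ 0` and
`{n ≥ 3} ∋ 1`. By connectedness they meet, and at a common point `n = p = 3`, hence `n + p = 6`
and `A t` is invertible.
-/

open Finset Module Filter Topology

namespace Matrix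

variable {n : Type*} [Fintype n]

theorem rank_add_finrank_ker_mulVecLin {K : Type*} [Field K] (M : Matrix n n K) :
    M.rank + finrank K (LinearMap.ker M.mulVecLin) = Fintype.card n := by
  rw [rank, LinearMap.finrank_range_add_finrank_ker, finrank_fintype_fun_eq_card]

variable [DecidableEq n]

theorem det_ne_zero_of_rank_eq_card {K : Type*} [Field K] {M : Matrix n n K}
    (h : M.rank = Fintype.card n) : M.det ≠ 0 := by
  have hker : finrank K (LinearMap.ker M.mulVecLin) = 0 := by
    have := M.rank_add_finrank_ker_mulVecLin
    omega
  have hinj : Function.Injective M.mulVec :=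
    LinearMap.ker_eq_bot.1 (Submodule.finrank_eq_zero.1 hker)
  exact ((isUnit_iff_isUnit_det M).1 (mulVec_injective_iff_isUnit.1 hinj)).ne_zero

noncomputable def quadForm (M : Matrix n n ℝ) (x : EuclideanSpace ℝ n) : ℝ :=
  inner ℝ x (M.toEuclideanLin x)

theorem continuous_quadForm :
    Continuous fun p : Matrix n n ℝ × EuclideanSpace ℝ n => p.1.quadForm p.2 := by
  simp only [quadForm, toLpLin_apply]
  exact continuous_snd.inner <| (PiLp.continuous_toLp 2 _).comp <|
    continuous_fst.matrix_mulVec <| (PiLp.continuous_ofLp 2 _).comp continuous_snd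

theorem quadForm_smul (M : Matrix n n ℝ) (c : ℝ) (x : EuclideanSpace ℝ n) :
    M.quadForm (c • x) = c ^ 2 * M.quadForm x := by
  simp only [quadForm, map_smul, real_inner_smul_left, real_inner_smul_right]
  ring

theorem neg_quadForm (M : Matrix n n ℝ) (x : EuclideanSpace ℝ n) :
    (-M).quadForm x = -M.quadForm x := by
  simp only [quadForm, map_neg, LinearMap.neg_apply, inner_neg_right]

theorem eventually_forall_quadForm_neg {M : Matrix n n ℝ} (W : Submodule ℝ (EuclideanSpace ℝ n))
    (hW : ∀ x ∈ W, x ≠ 0 → M.quadForm x < 0) :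
    ∀ᶠ N in 𝓝 M, ∀ x ∈ W, x ≠ 0 → N.quadForm x < 0 := by
  have hK : IsCompact ((W : Set (EuclideanSpace ℝ n)) ∩ Metric.sphere 0 1) :=
    (isCompact_sphere 0 1).inter_left W.closed_of_finiteDimensional
  have hsphere : ∀ᶠ N in 𝓝 M, ∀ y ∈ (W : Set (EuclideanSpace ℝ n)) ∩ Metric.sphere 0 1,
      N.quadForm y < 0 := by
    refine hK.eventually_forall_of_forall_eventually fun y hy => ?_
    have hy0 : y ≠ 0 := ne_zero_of_mem_unit_sphere ⟨y, hy.2⟩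
    exact (isOpen_lt continuous_quadForm continuous_const).mem_nhds (hW y hy.1 hy0)
  filter_upwards [hsphere] with N hN x hxW hx0
  have hx : ‖x‖⁻¹ • x ∈ (W : Set (EuclideanSpace ℝ n)) ∩ Metric.sphere 0 1 :=
    ⟨W.smul_mem _ hxW, by simp [norm_smul, hx0]⟩
  have hscaled := hN _ hx
  rw [quadForm_smul] at hscaled
  exact neg_of_mul_neg_right hscaled (by positivity)

theorem eventually_forall_quadForm_pos {M : Matrix n n ℝ} (W : Submodule ℝ (EuclideanSpace ℝ n))
    (hW : ∀ x ∈ W, x ≠ 0 → 0 < M.quadForm x) :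
    ∀ᶠ N in 𝓝 M, ∀ x ∈ W, x ≠ 0 → 0 < N.quadForm x := by
  have hneg := eventually_forall_quadForm_neg (M := -M) W fun x hx hx0 => by
    simpa [neg_quadForm] using hW x hx hx0
  filter_upwards [(continuous_neg.tendsto M).eventually hneg] with N hN x hx hx0
  simpa [neg_quadForm] using hN x hx hx0

namespace IsHermitian

variable {M : Matrix n n ℝ} (hM : M.IsHermitian)

noncomputable def negIndex : ℕ := #{i | hM.eigenvalues i < 0}

noncomputable def posIndex : ℕ := #{i | 0 < hM.eigenvalues i}

theorem quadForm_eq_sum (x : EuclideanSpace ℝ n) :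
    M.quadForm x = ∑ i, hM.eigenvalues i * hM.eigenvectorBasis.repr x i ^ 2 := by
  set b := hM.eigenvectorBasis
  have hb : ∀ i, M.toEuclideanLin (b i) = hM.eigenvalues i • b i := fun i =>
    (WithLp.ofLp_injective 2) (by simpa [toLpLin_apply] using hM.mulVec_eigenvectorBasis i)
  calc M.quadForm x = inner ℝ x (M.toEuclideanLin (∑ i, b.repr x i • b i)) := by
        rw [b.sum_repr]; rfl
    _ = ∑ i, b.repr x i * (hM.eigenvalues i * inner ℝ x (b i)) := by
        simp only [map_sum, map_smul, hb, inner_sum, real_inner_smul_right]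
    _ = _ := by
        refine sum_congr rfl fun i _ => ?_
        rw [real_inner_comm, ← b.repr_apply_apply]
        ring

noncomputable def eigenSpan (S : Finset n) : Submodule ℝ (EuclideanSpace ℝ n) :=
  Submodule.span ℝ (hM.eigenvectorBasis '' S)

theorem finrank_eigenSpan (S : Finset n) : finrank ℝ (hM.eigenSpan S) = #S := by
  have hli : LinearIndependent ℝ fun i : (S : Set n) => hM.eigenvectorBasis i :=
    hM.eigenvectorBasis.orthonormal.linearIndependent.comp _ Subtype.val_injective
  rw [eigenSpan, Set.image_eq_range, finrank_span_eq_card hli]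
  simp

theorem repr_eq_zero_of_mem_eigenSpan {S : Finset n} {x : EuclideanSpace ℝ n}
    (hx : x ∈ hM.eigenSpan S) {j : n} (hj : j ∉ S) : hM.eigenvectorBasis.repr x j = 0 := by
  rw [eigenSpan, ← hM.eigenvectorBasis.coe_toBasis, Basis.mem_span_image] at hx
  rw [← hM.eigenvectorBasis.coe_toBasis_repr_apply]
  by_contra h
  exact hj (hx (Finsupp.mem_support_iff.2 h))

theorem quadForm_eq_sum_of_mem_eigenSpan {S : Finset n} {x : EuclideanSpace ℝ n}
    (hx : x ∈ hM.eigenSpan S) :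
    M.quadForm x = ∑ i ∈ S, hM.eigenvalues i * hM.eigenvectorBasis.repr x i ^ 2 := by
  rw [hM.quadForm_eq_sum, ← sum_subset (subset_univ S) fun i _ hi => ?_]
  simp [hM.repr_eq_zero_of_mem_eigenSpan hx hi]

theorem exists_repr_ne_zero_of_mem_eigenSpan {S : Finset n} {x : EuclideanSpace ℝ n}
    (hx : x ∈ hM.eigenSpan S) (hx0 : x ≠ 0) : ∃ i ∈ S, hM.eigenvectorBasis.repr x i ≠ 0 := by
  by_contra! h
  refine hx0 (hM.eigenvectorBasis.repr.injective ?_)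
  ext i
  by_cases hi : i ∈ S
  · simpa using h i hi
  · simpa using hM.repr_eq_zero_of_mem_eigenSpan hx hi

theorem quadForm_neg_of_mem_eigenSpan {S : Finset n} (hS : ∀ i ∈ S, hM.eigenvalues i < 0)
    {x : EuclideanSpace ℝ n} (hx : x ∈ hM.eigenSpan S) (hx0 : x ≠ 0) : M.quadForm x < 0 := by
  obtain ⟨j, hj, hj0⟩ := hM.exists_repr_ne_zero_of_mem_eigenSpan hx hx0
  rw [hM.quadForm_eq_sum_of_mem_eigenSpan hx]
  exact sum_neg' (fun i hi => mul_nonpos_of_nonpos_of_nonneg (hS i hi).le (sq_nonneg _))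
    ⟨j, hj, mul_neg_of_neg_of_pos (hS j hj) (by positivity)⟩

theorem quadForm_pos_of_mem_eigenSpan {S : Finset n} (hS : ∀ i ∈ S, 0 < hM.eigenvalues i)
    {x : EuclideanSpace ℝ n} (hx : x ∈ hM.eigenSpan S) (hx0 : x ≠ 0) : 0 < M.quadForm x := by
  obtain ⟨j, hj, hj0⟩ := hM.exists_repr_ne_zero_of_mem_eigenSpan hx hx0
  rw [hM.quadForm_eq_sum_of_mem_eigenSpan hx]
  exact sum_pos' (fun i hi => mul_nonneg (hS i hi).le (sq_nonneg _))
    ⟨j, hj, mul_pos (hS j hj) (by positivity)⟩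

theorem quadForm_nonneg_of_mem_eigenSpan {S : Finset n} (hS : ∀ i ∈ S, 0 ≤ hM.eigenvalues i)
    {x : EuclideanSpace ℝ n} (hx : x ∈ hM.eigenSpan S) : 0 ≤ M.quadForm x := by
  rw [hM.quadForm_eq_sum_of_mem_eigenSpan hx]
  exact sum_nonneg fun i hi => mul_nonneg (hS i hi) (sq_nonneg _)

theorem quadForm_nonpos_of_mem_eigenSpan {S : Finset n} (hS : ∀ i ∈ S, hM.eigenvalues i ≤ 0)
    {x : EuclideanSpace ℝ n} (hx : x ∈ hM.eigenSpan S) : M.quadForm x ≤ 0 := by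
  rw [hM.quadForm_eq_sum_of_mem_eigenSpan hx]
  exact sum_nonpos fun i hi => mul_nonpos_of_nonpos_of_nonneg (hS i hi) (sq_nonneg _)

theorem finrank_le_card_of_inf_eigenSpan_compl_eq_bot (S : Finset n)
    {W : Submodule ℝ (EuclideanSpace ℝ n)} (hW : W ⊓ hM.eigenSpan Sᶜ = ⊥) :
    finrank ℝ W ≤ #S := by
  have hdim := Submodule.finrank_sup_add_finrank_inf_eq W (hM.eigenSpan Sᶜ)
  have hsup := Submodule.finrank_le (W ⊔ hM.eigenSpan Sᶜ)
  rw [hW, finrank_bot, hM.finrank_eigenSpan, card_compl] at hdim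
  rw [finrank_euclideanSpace] at hsup
  have := S.card_le_univ
  omega

theorem finrank_le_negIndex {W : Submodule ℝ (EuclideanSpace ℝ n)}
    (hW : ∀ x ∈ W, x ≠ 0 → M.quadForm x < 0) : finrank ℝ W ≤ hM.negIndex := by
  refine hM.finrank_le_card_of_inf_eigenSpan_compl_eq_bot _ ((Submodule.eq_bot_iff _).2 ?_)
  rintro x ⟨hxW, hxS⟩
  by_contra hx0
  refine (hW x hxW hx0).not_ge (hM.quadForm_nonneg_of_mem_eigenSpan (fun i hi => ?_) hxS)
  simpa using hi

theorem finrank_le_posIndex {W : Submodule ℝ (EuclideanSpace ℝ n)}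
    (hW : ∀ x ∈ W, x ≠ 0 → 0 < M.quadForm x) : finrank ℝ W ≤ hM.posIndex := by
  refine hM.finrank_le_card_of_inf_eigenSpan_compl_eq_bot _ ((Submodule.eq_bot_iff _).2 ?_)
  rintro x ⟨hxW, hxS⟩
  by_contra hx0
  refine (hW x hxW hx0).not_ge (hM.quadForm_nonpos_of_mem_eigenSpan (fun i hi => ?_) hxS)
  simpa using hi

theorem eventually_negIndex_le :
    ∀ᶠ N in 𝓝 M, ∀ hN : N.IsHermitian, hM.negIndex ≤ hN.negIndex := by
  have hneg := eventually_forall_quadForm_neg (hM.eigenSpan {i | hM.eigenvalues i < 0})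
    fun x hx hx0 => hM.quadForm_neg_of_mem_eigenSpan (by simp) hx hx0
  filter_upwards [hneg] with N hN hN'
  simpa [finrank_eigenSpan, negIndex] using hN'.finrank_le_negIndex hN

theorem eventually_posIndex_le :
    ∀ᶠ N in 𝓝 M, ∀ hN : N.IsHermitian, hM.posIndex ≤ hN.posIndex := by
  have hpos := eventually_forall_quadForm_pos (hM.eigenSpan {i | 0 < hM.eigenvalues i})
    fun x hx hx0 => hM.quadForm_pos_of_mem_eigenSpan (by simp) hx hx0
  filter_upwards [hpos] with N hN hN'
  simpa [finrank_eigenSpan, posIndex] using hN'.finrank_le_posIndex hN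

theorem negIndex_add_posIndex : hM.negIndex + hM.posIndex = M.rank := by
  rw [hM.rank_eq_card_non_zero_eigs, Fintype.card_subtype, negIndex, posIndex,
    ← card_union_of_disjoint (disjoint_filter.2 fun i _ hneg hpos => hneg.not_gt hpos)]
  congr 1
  ext i
  simp only [mem_filter, mem_union, mem_univ, true_and]
  exact ne_iff_lt_or_gt.symm

end IsHermitian

section Path

variable {X : Type*} [TopologicalSpace X] {A : X → Matrix n n ℝ}

theorem isOpen_setOf_le_negIndex (hA : Continuous A) (hH : ∀ x, (A x).IsHermitian) (k : ℕ) :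
    IsOpen {x | k ≤ (hH x).negIndex} := by
  refine isOpen_iff_mem_nhds.2 fun x hx => ?_
  filter_upwards [(hA.tendsto x).eventually (hH x).eventually_negIndex_le] with y hy
  exact hx.trans (hy (hH y))

theorem isOpen_setOf_le_posIndex (hA : Continuous A) (hH : ∀ x, (A x).IsHermitian) (k : ℕ) :
    IsOpen {x | k ≤ (hH x).posIndex} := by
  refine isOpen_iff_mem_nhds.2 fun x hx => ?_
  filter_upwards [(hA.tendsto x).eventually (hH x).eventually_posIndex_le] with y hy
  exact hx.trans (hy (hH y))

theorem exists_le_negIndex_and_le_posIndex [PreconnectedSpace X] (hA : Continuous A)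
    (hH : ∀ x, (A x).IsHermitian) {a b : ℕ} (hrank : ∀ x, a + b ≤ (A x).rank + 1) {x₀ x₁ : X}
    (h₀ : b ≤ (hH x₀).posIndex) (h₁ : a ≤ (hH x₁).negIndex) :
    ∃ x, a ≤ (hH x).negIndex ∧ b ≤ (hH x).posIndex := by
  have hcover : Set.univ ⊆ {x | b ≤ (hH x).posIndex} ∪ {x | a ≤ (hH x).negIndex} := by
    intro x _
    have := (hH x).negIndex_add_posIndex
    have := hrank x
    rcases le_or_gt b (hH x).posIndex with h | h
    · exact Or.inl h
    · right
      show a ≤ (hH x).negIndex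
      omega
  obtain ⟨x, -, hpos, hneg⟩ := isPreconnected_univ _ _ (isOpen_setOf_le_posIndex hA hH b)
    (isOpen_setOf_le_negIndex hA hH a) hcover ⟨x₀, trivial, h₀⟩ ⟨x₁, trivial, h₁⟩
  exact ⟨x, hneg, hpos⟩

end Path

end Matrix

open Matrix in
/-- Let `A : [0,1] → M₆(ℝ)` be a continuous path of symmetric matrices
whose determinant vanishes at only finitely many `t`, with one-dimensional kernel at each
such `t`.  If `A 0` has exactly one negative eigenvalue and `A 1` has exactly five, then
some `A t` is invertible of signature `(3,3)`. -/
theorem signature_intermediate_value (A : ℝ → Matrix (Fin 6) (Fin 6) ℝ)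
    (hcont : ContinuousOn A (Set.Icc 0 1))
    (hsymm : ∀ t ∈ Set.Icc (0 : ℝ) 1, (A t).IsHermitian)
    (hker : ∀ t ∈ Set.Icc (0 : ℝ) 1, (A t).det = 0 →
      Module.finrank ℝ (LinearMap.ker (A t).mulVecLin) = 1)
    (h0 : (Finset.univ.filter fun i =>
      (hsymm 0 (by norm_num)).eigenvalues i < 0).card = 1)
    (h1 : (Finset.univ.filter fun i =>
      (hsymm 1 (by norm_num)).eigenvalues i < 0).card = 5) :
    ∃ t, ∃ ht : t ∈ Set.Icc (0 : ℝ) 1, (A t).det ≠ 0 ∧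
      (Finset.univ.filter fun i => (hsymm t ht).eigenvalues i < 0).card = 3 ∧
      (Finset.univ.filter fun i => 0 < (hsymm t ht).eigenvalues i).card = 3 := by
  have hrank : ∀ t ∈ Set.Icc (0 : ℝ) 1, 3 + 3 ≤ (A t).rank + 1 := by
    intro t ht
    have hnullity := (A t).rank_add_finrank_ker_mulVecLin
    rw [Fintype.card_fin] at hnullity
    by_cases hdet : (A t).det = 0
    · have := hker t ht hdet
      omega
    · have := rank_of_det_ne_zero hdet
      rw [Fintype.card_fin] at this
      omega
  have hpos₀ : 3 ≤ (hsymm 0 (by norm_num)).posIndex := by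
    have hsum := (hsymm 0 (by norm_num)).negIndex_add_posIndex
    have := hrank 0 (by norm_num)
    rw [IsHermitian.negIndex, h0] at hsum
    omega
  obtain ⟨t, hneg, hpos⟩ : ∃ t : Set.Icc (0 : ℝ) 1,
      3 ≤ (hsymm t t.2).negIndex ∧ 3 ≤ (hsymm t t.2).posIndex :=
    exists_le_negIndex_and_le_posIndex hcont.domRestrict (fun t => hsymm t t.2)
      (fun t => hrank t t.2) (x₀ := ⟨0, by norm_num⟩) (x₁ := ⟨1, by norm_num⟩) hpos₀
      ((show 3 ≤ 5 by norm_num).trans h1.ge)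
  have hsum := (hsymm t t.2).negIndex_add_posIndex
  have hle := (A t).rank_le_card_width
  rw [Fintype.card_fin] at hle
  refine ⟨t, t.2, det_ne_zero_of_rank_eq_card (by rw [Fintype.card_fin]; omega), ?_, ?_⟩
  · change (hsymm t t.2).negIndex = 3
    omega
  · change (hsymm t t.2).posIndex = 3
    omega
end
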